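/- arXiv:math/0609090 — 10 statements merged into one kernel-verified Lean document; each statement's English description precedes it below -/
import Mathlib

section
/- A topological space X is submaximal (every dense subset is open) if and only if X is both OHI (every dense subset of every nonempty open subspace has dense interior, equivalently every dense subset contains a dense open subset) and NODEC (every nowhere dense subset is closed). -/
/-!
Complementation exchanges the two notions: a nowhere dense set has dense complement, and a set
that includes a dense open set has nowhere dense complement. So submaximality applied
to complements of nowhere dense sets gives NODEC, and NODEC applied to the complement of a set
including a dense open set shows that set is open.
-/

open Set

universe u

variable (X : Type*) [TopologicalSpace X]

def IsSubmaximal : Prop := ∀ s : Set X, Dense s → IsOpen s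

def IsOHI : Prop := ∀ s : Set X, Dense s → ∃ u ⊆ s, IsOpen u ∧ Dense u

def IsNODEC : Prop := ∀ s : Set X, IsNowhereDense s → IsClosed s

variable {X}

theorem IsNowhereDense.dense_compl {s : Set X} (hs : IsNowhereDense s) : Dense sᶜ :=
  interior_eq_empty_iff_dense_compl.mp <|
    eq_empty_of_subset_empty (hs ▸ interior_mono subset_closure)

theorem isNowhereDense_compl_of_dense_isOpen_subset {s u : Set X} (hu : IsOpen u)
    (hud : Dense u) (hus : u ⊆ s) : IsNowhereDense sᶜ :=
  have hu' : IsNowhereDense uᶜ :=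
    (isClosed_isNowhereDense_iff_compl.mpr (by rw [compl_compl]; exact ⟨hu, hud⟩)).2
  hu'.mono (compl_subset_compl.mpr hus)

theorem IsSubmaximal.isOHI (h : IsSubmaximal X) : IsOHI X :=
  fun s hs => ⟨s, subset_rfl, h s hs, hs⟩

theorem IsSubmaximal.isNODEC (h : IsSubmaximal X) : IsNODEC X :=
  fun _ hs => isOpen_compl_iff.mp (h _ hs.dense_compl)

theorem IsOHI.isSubmaximal (hohi : IsOHI X) (hnodec : IsNODEC X) : IsSubmaximal X := by
  intro s hs
  obtain ⟨u, hus, hu, hud⟩ := hohi s hs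
  exact isClosed_compl_iff.mp (hnodec _ (isNowhereDense_compl_of_dense_isOpen_subset hu hud hus))

/-- A space is submaximal (every dense subset is open) iff it is OHI (every dense subset
includes a dense open subset) and NODEC (every nowhere dense subset is closed). -/
theorem stmt_2 {X : Type u} [TopologicalSpace X] :
    (∀ S : Set X, Dense S → IsOpen S) ↔
      ((∀ S : Set X, Dense S → ∃ U ⊆ S, IsOpen U ∧ Dense U) ∧
        (∀ S : Set X, IsNowhereDense S → IsClosed S)) :=
  ⟨fun h => ⟨IsSubmaximal.isOHI h, IsSubmaximal.isNODEC h⟩,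
    fun ⟨hohi, hnodec⟩ => IsOHI.isSubmaximal hohi hnodec⟩
end

section
/- Let D be a family of dense subsets of a topological space X. Then X is D-forced (every dense subset of X includes a D-mosaic) if and only if every somewhere dense subset of X includes a D-piece, i.e. a set of the form D ∩ U with D ∈ D and U nonempty open. -/
/-!
If `X` is `𝒟`-forced and `S` is somewhere dense, apply forcing to the dense set
`S ∪ (closure S)ᶜ`: any tile `V ∩ D_V` of the mosaic meeting the open set `interior (closure S)`
cuts out a piece inside `S`. Conversely, for dense `S`, call an open `V` good if `V ∩ D ⊆ S` for
some `D ∈ 𝒟`. Every nonempty open `G` meets `S` in a somewhere dense set, whose piece `D ∩ U`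
yields the nonempty good set `U ∩ G ⊆ G`; hence a maximal disjoint family of good sets (Zorn) has
dense union, and choosing the witnesses `D_V` gives a mosaic inside `S`.
-/

open Cardinal Set

universe u

variable {X : Type u} [TopologicalSpace X]

/-- A `(𝒟,X)`-piece: a set of the form `D ∩ U` with `D ∈ 𝒟` and `U` nonempty open. -/
def IsPiece (𝒟 : Set (Set X)) (P : Set X) : Prop :=
  ∃ D ∈ 𝒟, ∃ U : Set X, IsOpen U ∧ U.Nonempty ∧ P = D ∩ U

/-- A `(𝒟,X)`-mosaic: `⋃ {V ∩ D_V : V ∈ 𝒱}` where `𝒱` is a maximal disjoint family of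
open sets (maximality being equivalent to `⋃₀ 𝒱` being dense) and each `D_V ∈ 𝒟`. -/
def IsMosaic (𝒟 : Set (Set X)) (M : Set X) : Prop :=
  ∃ (𝒱 : Set (Set X)) (f : Set X → Set X),
    (∀ V ∈ 𝒱, IsOpen V) ∧ 𝒱.PairwiseDisjoint id ∧ Dense (⋃₀ 𝒱) ∧
    (∀ V ∈ 𝒱, f V ∈ 𝒟) ∧ M = ⋃ V ∈ 𝒱, V ∩ f V

/-- `X` is `𝒟`-forced iff every dense subset of `X` includes a `𝒟`-mosaic. -/
def DForced (𝒟 : Set (Set X)) : Prop :=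
  ∀ S : Set X, Dense S → ∃ M ⊆ S, IsMosaic 𝒟 M

theorem exists_maximal_pairwiseDisjoint_subset {ι β : Type*} [PartialOrder β] [OrderBot β]
    (𝒢 : Set ι) (f : ι → β) :
    ∃ 𝒱, Maximal (fun 𝒱 : Set ι => 𝒱 ⊆ 𝒢 ∧ 𝒱.PairwiseDisjoint f) 𝒱 := by
  refine zorn_subset _ fun c hc hchain => ⟨⋃₀ c, ⟨?_, ?_⟩, fun _ => subset_sUnion_of_mem⟩
  · exact sUnion_subset fun 𝒱 h𝒱 => (hc h𝒱).1
  · exact (hchain.pairwiseDisjoint_sUnion f).2 fun 𝒱 h𝒱 => (hc h𝒱).2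

theorem dense_union_compl_closure (S : Set X) : Dense (S ∪ (closure S)ᶜ) := by
  intro x
  rw [closure_union]
  by_cases hx : x ∈ closure S
  · exact Or.inl hx
  · exact Or.inr (subset_closure hx)

theorem Dense.not_isNowhereDense_inter {S G : Set X} (hS : Dense S) (hG : IsOpen G)
    (hne : G.Nonempty) : ¬ IsNowhereDense (S ∩ G) := by
  intro h
  have : G ⊆ interior (closure (S ∩ G)) :=
    hG.subset_interior_iff.mpr (inter_comm S G ▸ hS.open_subset_closure_inter hG)
  rw [h] at this
  exact hne.ne_empty (subset_empty_iff.mp this)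

theorem dense_sUnion_of_maximal_pairwiseDisjoint {𝒢 𝒱 : Set (Set X)}
    (h𝒢 : ∀ G, IsOpen G → G.Nonempty → ∃ V ∈ 𝒢, V.Nonempty ∧ V ⊆ G)
    (h𝒱 : Maximal (fun 𝒱 : Set (Set X) => 𝒱 ⊆ 𝒢 ∧ 𝒱.PairwiseDisjoint id) 𝒱) :
    Dense (⋃₀ 𝒱) := by
  by_contra hd
  rw [dense_iff_closure_eq, ← Ne, ← nonempty_compl] at hd
  obtain ⟨V, hV𝒢, ⟨z, hzV⟩, hVG⟩ := h𝒢 _ isClosed_closure.isOpen_compl hd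
  have hVdisj : ∀ W ∈ 𝒱, V ≠ W → Disjoint (id V) (id W) := fun W hW _ =>
    disjoint_left.mpr fun a haV haW => hVG haV (subset_closure ⟨W, hW, haW⟩)
  have hV𝒱 : V ∈ 𝒱 :=
    h𝒱.2 ⟨insert_subset hV𝒢 h𝒱.1.1, h𝒱.1.2.insert hVdisj⟩ (subset_insert V 𝒱) (mem_insert V 𝒱)
  exact hVG hzV (subset_closure ⟨V, hV𝒱, hzV⟩)

section

variable {𝒟 : Set (Set X)}

theorem IsMosaic.exists_isPiece_subset_inter {M W : Set X} (hM : IsMosaic 𝒟 M) (hW : IsOpen W)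
    (hne : W.Nonempty) : ∃ P ⊆ M ∩ W, IsPiece 𝒟 P := by
  obtain ⟨𝒱, f, hopen, -, hdense, hf, rfl⟩ := hM
  obtain ⟨x, hxW, V, hV𝒱, hxV⟩ := hdense.inter_open_nonempty W hW hne
  refine ⟨f V ∩ (V ∩ W), ?_, f V, hf V hV𝒱, V ∩ W, (hopen V hV𝒱).inter hW, ⟨x, hxV, hxW⟩, rfl⟩
  rintro y ⟨hyf, hyV, hyW⟩
  exact ⟨mem_biUnion hV𝒱 ⟨hyV, hyf⟩, hyW⟩

theorem exists_isMosaic_subset {S : Set X} {𝒱 : Set (Set X)} (hopen : ∀ V ∈ 𝒱, IsOpen V)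
    (hdisj : 𝒱.PairwiseDisjoint id) (hdense : Dense (⋃₀ 𝒱))
    (hgood : ∀ V ∈ 𝒱, ∃ D ∈ 𝒟, V ∩ D ⊆ S) : ∃ M ⊆ S, IsMosaic 𝒟 M := by
  choose! f hf𝒟 hfS using hgood
  exact ⟨⋃ V ∈ 𝒱, V ∩ f V, iUnion₂_subset hfS, 𝒱, f, hopen, hdisj, hdense, hf𝒟, rfl⟩

theorem DForced.exists_isPiece_subset (hF : DForced 𝒟) {S : Set X} (hS : ¬ IsNowhereDense S) :
    ∃ P ⊆ S, IsPiece 𝒟 P := by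
  obtain ⟨M, hMS, hM⟩ := hF _ (dense_union_compl_closure S)
  obtain ⟨P, hPM, hP⟩ :=
    hM.exists_isPiece_subset_inter isOpen_interior (nonempty_iff_ne_empty.mpr hS)
  refine ⟨P, fun y hy => ?_, hP⟩
  obtain ⟨hyM, hyW⟩ := hPM hy
  exact (hMS hyM).resolve_right (not_not_intro (interior_subset hyW))

theorem dForced_of_forall_exists_isPiece_subset (h𝒟 : ∀ D ∈ 𝒟, Dense D)
    (hP : ∀ S : Set X, ¬ IsNowhereDense S → ∃ P ⊆ S, IsPiece 𝒟 P) : DForced 𝒟 := by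
  intro S hS
  let 𝒢 : Set (Set X) := {V | IsOpen V ∧ ∃ D ∈ 𝒟, V ∩ D ⊆ S}
  have h𝒢 : ∀ G, IsOpen G → G.Nonempty → ∃ V ∈ 𝒢, V.Nonempty ∧ V ⊆ G := by
    intro G hG hne
    obtain ⟨P, hPS, D, hD𝒟, U, hU, hUne, rfl⟩ := hP _ (hS.not_isNowhereDense_inter hG hne)
    obtain ⟨z, hzU, hzD⟩ := (h𝒟 D hD𝒟).inter_open_nonempty U hU hUne
    refine ⟨U ∩ G, ⟨hU.inter hG, D, hD𝒟, ?_⟩, ⟨z, hzU, (hPS ⟨hzD, hzU⟩).2⟩, inter_subset_right⟩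
    rintro y ⟨⟨hyU, -⟩, hyD⟩
    exact (hPS ⟨hyD, hyU⟩).1
  obtain ⟨𝒱, h𝒱⟩ := exists_maximal_pairwiseDisjoint_subset 𝒢 id
  exact exists_isMosaic_subset (fun V hV => (h𝒱.1.1 hV).1) h𝒱.1.2
    (dense_sUnion_of_maximal_pairwiseDisjoint h𝒢 h𝒱) fun V hV => (h𝒱.1.1 hV).2

end

/-- `X` is `𝒟`-forced iff every somewhere dense subset of `X` includes a `𝒟`-piece. -/
theorem stmt_3 (𝒟 : Set (Set X)) (h𝒟 : ∀ D ∈ 𝒟, Dense D) :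
    DForced 𝒟 ↔ ∀ S : Set X, ¬ IsNowhereDense S → ∃ P ⊆ S, IsPiece 𝒟 P :=
  ⟨fun hF _ hS => hF.exists_isPiece_subset hS, dForced_of_forall_exists_isPiece_subset h𝒟⟩
end

section
/- Let X be a D-forced space and S ⊆ X dense such that for every D ∈ D either S ∩ D is nowhere dense or S \ D is nowhere dense. Then the subspace S is OHI, i.e. every dense subset of the subspace S contains a subset open in S and dense in S. -/
/-!
A dense subset `T` of the subspace `S` is dense in `X`, so it contains a mosaic
`⋃ V ∩ f V`. On each nonempty piece `V`, the set `S ∩ f V` is dense in `V`, hence not nowhere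
dense, so the dichotomy makes `S \ f V` nowhere dense. Removing `closure (S \ f V)` from each
`V` leaves an open dense set `U`, and `U ∩ S` lies in the mosaic, hence in `T`.
-/

open Cardinal Set

universe u

variable {X : Type u} [TopologicalSpace X]

theorem IsOpen.eq_empty_of_subset_closure {V A : Set X} (hV : IsOpen V) (hA : IsNowhereDense A)
    (h : V ⊆ closure A) : V = ∅ :=
  subset_empty_iff.mp (hA ▸ interior_maximal h hV)

theorem IsOpen.subset_closure_diff_closure {V N : Set X} (hV : IsOpen V)
    (hN : IsNowhereDense N) : V ⊆ closure (V \ closure N) := by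
  have hdense : Dense (closure N)ᶜ := interior_eq_empty_iff_dense_compl.mp hN
  simpa only [sdiff_eq, inter_comm] using hdense.open_subset_closure_inter hV

theorem IsOpen.subset_closure_diff_closure_diff {V S D : Set X} (hV : IsOpen V) (hD : Dense D)
    (hVD : V ∩ D ⊆ S) (hsplit : IsNowhereDense (S ∩ D) ∨ IsNowhereDense (S \ D)) :
    V ⊆ closure (V \ closure (S \ D)) := by
  rcases hsplit with hSD | hSD
  · have hV_sub : V ⊆ closure (S ∩ D) :=
      (hD.open_subset_closure_inter hV).trans
        (closure_mono (subset_inter hVD inter_subset_right))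
    simp only [hV.eq_empty_of_subset_closure hSD hV_sub, empty_subset]
  · exact hV.subset_closure_diff_closure hSD

theorem Dense.biUnion_of_subset_closure {𝒱 : Set (Set X)} {W : Set X → Set X}
    (h𝒱 : Dense (⋃₀ 𝒱)) (hW : ∀ V ∈ 𝒱, V ⊆ closure (W V)) : Dense (⋃ V ∈ 𝒱, W V) :=
  dense_closure.mp <| h𝒱.mono <| sUnion_subset fun V hV =>
    (hW V hV).trans (closure_mono (subset_biUnion_of_mem hV))

/-- If `X` is `𝒟`-forced and `S` is dense in `X` such that for every `D ∈ 𝒟` either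
`S ∩ D =* ∅` or `S ⊆* D` (modulo nowhere dense sets), then the subspace `S` is OHI:
every dense subset of the subspace `S` contains a subset that is relatively open in `S`
and dense in `S`. -/
theorem stmt_7 (𝒟 : Set (Set X)) (h𝒟 : ∀ D ∈ 𝒟, Dense D) (hf : DForced 𝒟)
    (S : Set X) (hS : Dense S)
    (hsplit : ∀ D ∈ 𝒟, IsNowhereDense (S ∩ D) ∨ IsNowhereDense (S \ D)) :
    ∀ T ⊆ S, S ⊆ closure T →
      ∃ T' ⊆ T, (∃ U : Set X, IsOpen U ∧ T' = U ∩ S) ∧ S ⊆ closure T' := by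
  intro T hTS hST
  obtain ⟨M, hMT, 𝒱, f, hopen, -, hcover, hf𝒟, rfl⟩ := hf T (dense_closure.mp (hS.mono hST))
  set U := ⋃ V ∈ 𝒱, V \ closure (S \ f V)
  have hU : IsOpen U := isOpen_biUnion fun V hV => (hopen V hV).sdiff isClosed_closure
  have hUdense : Dense U := hcover.biUnion_of_subset_closure fun V hV =>
    (hopen V hV).subset_closure_diff_closure_diff (h𝒟 _ (hf𝒟 V hV))
      (fun _ hx => hTS (hMT (mem_biUnion hV hx))) (hsplit _ (hf𝒟 V hV))
  refine ⟨U ∩ S, ?_, ⟨U, hU, rfl⟩, ?_⟩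
  · rintro x ⟨hxU, hxS⟩
    obtain ⟨V, hV, hxV, hxN⟩ := mem_iUnion₂.mp hxU
    have hxf : x ∈ f V := by_contra fun hxf => hxN (subset_closure ⟨hxS, hxf⟩)
    exact hMT (mem_biUnion hV ⟨hxV, hxf⟩)
  · rw [(hUdense.inter_of_isOpen_left hS hU).closure_eq]
    exact subset_univ S
end

section
/- If X is a D-forced space with |D|⁺ ≥ ĉ(X), then X is not |D|⁺-extraresolvable; in particular X is not |D|⁺-resolvable. -/
open Cardinal Set

universe u

variable {X : Type u} [TopologicalSpace X]

/-- `ĉ(X)`: the least cardinal `μ` such that `X` contains no family of `μ` many pairwise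
disjoint nonempty open sets. -/
noncomputable def hatc (X : Type u) [TopologicalSpace X] : Cardinal.{u} :=
  sInf {μ : Cardinal.{u} |
    ∀ 𝒰 : Set (Set X), (∀ U ∈ 𝒰, IsOpen U ∧ U.Nonempty) →
      𝒰.PairwiseDisjoint id → #↥𝒰 < μ}

/-- `X` is `μ`-extraresolvable: there are `μ` many dense subsets of `X` any two of which
have nowhere dense intersection. -/
def ExtraresolvCard (X : Type u) [TopologicalSpace X] (μ : Cardinal.{u}) : Prop :=
  ∃ 𝒮 : Set (Set X), #↥𝒮 = μ ∧ (∀ A ∈ 𝒮, Dense A) ∧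
    ∀ A ∈ 𝒮, ∀ B ∈ 𝒮, A ≠ B → IsNowhereDense (A ∩ B)

/-- The subspace `A` is `μ`-resolvable: `A` contains `μ` pairwise disjoint subsets,
each dense in `A`. -/
def ResolvCard (μ : Cardinal.{u}) (A : Set X) : Prop :=
  ∃ 𝒮 : Set (Set X), #↥𝒮 = μ ∧ 𝒮.PairwiseDisjoint id ∧
    ∀ T ∈ 𝒮, T ⊆ A ∧ A ⊆ closure T

/-- Any pairwise disjoint family of nonempty open sets has size `< hatc X`. -/
lemma lt_hatc (𝒰 : Set (Set X)) (h1 : ∀ U ∈ 𝒰, IsOpen U ∧ U.Nonempty)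
    (h2 : 𝒰.PairwiseDisjoint id) : #↥𝒰 < hatc X := by
  have hne : {μ : Cardinal.{u} |
      ∀ 𝒰 : Set (Set X), (∀ U ∈ 𝒰, IsOpen U ∧ U.Nonempty) →
        𝒰.PairwiseDisjoint id → #↥𝒰 < μ}.Nonempty :=
    ⟨Order.succ (#(Set X)), fun 𝒰' _ _ =>
      (Cardinal.mk_set_le 𝒰').trans_lt (Order.lt_succ _)⟩
  have hle : Order.succ (#↥𝒰) ≤ hatc X :=
    le_csInf hne fun μ hμ => Order.succ_le_of_lt (hμ 𝒰 h1 h2)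
  exact Order.succ_le_iff.mp hle

/-- A finite intersection of dense open sets is dense. -/
lemma dense_iInter_fin {Y : Type*} [TopologicalSpace Y] {ι : Type*} [Finite ι]
    {O : ι → Set Y} (ho : ∀ i, IsOpen (O i)) (hd : ∀ i, Dense (O i)) :
    Dense (⋂ i, O i) := by
  cases nonempty_fintype ι
  classical
  have h : ∀ s : Finset ι, Dense (⋂ i ∈ s, O i) := by
    intro s
    induction s using Finset.induction_on with
    | empty => simp only [Finset.notMem_empty, iInter_of_empty, iInter_univ]; exact dense_univ
    | @insert a s _ ih =>
        rw [Finset.set_biInter_insert]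
        exact (hd a).inter_of_isOpen_left ih (ho a)
  have := h Finset.univ
  simpa using this

/-- If `X` is `𝒟`-forced and `|𝒟|⁺ ≥ ĉ(X)` then `X` is not `|𝒟|⁺`-extraresolvable,
and in particular not `|𝒟|⁺`-resolvable. -/
theorem stmt_9 [Nonempty X] (𝒟 : Set (Set X)) (h𝒟 : ∀ D ∈ 𝒟, Dense D)
    (hf : DForced 𝒟) (hc : hatc X ≤ Order.succ (#↥𝒟)) :
    ¬ ExtraresolvCard X (Order.succ (#↥𝒟)) ∧
      ¬ ResolvCard (Order.succ (#↥𝒟)) (Set.univ : Set X) := by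
  have hmain : ¬ ExtraresolvCard X (Order.succ (#↥𝒟)) := by
    rintro ⟨𝒮, hcard, hdense, hnwd⟩
    have key : ∀ A : ↥𝒮, ∃ (𝒱 : Set (Set X)) (F : Set X → Set X),
        (∀ V ∈ 𝒱, IsOpen V) ∧ Dense (⋃₀ 𝒱) ∧ (∀ V ∈ 𝒱, F V ∈ 𝒟) ∧
        (⋃ V ∈ 𝒱, V ∩ F V) ⊆ (A : Set X) := by
      rintro ⟨A, hA⟩
      obtain ⟨M, hMA, 𝒱, F, hop, _, hdu, hFm, hM⟩ := hf A (hdense A hA)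
      exact ⟨𝒱, F, hop, hdu, hFm, hM ▸ hMA⟩
    choose 𝒱 F hop hdu hF hsub using key
    -- If two pieces from distinct members of `𝒮` use the same element of `𝒟`,
    -- the corresponding open sets are disjoint.
    have pair : ∀ A B : ↥𝒮, A ≠ B → ∀ V ∈ 𝒱 A, ∀ W ∈ 𝒱 B,
        F A V = F B W → V ∩ W = ∅ := by
      intro A B hAB V hV W hW hFVW
      by_contra hne
      have hVW : (V ∩ W).Nonempty := nonempty_iff_ne_empty.mpr hne
      have hD : Dense (F A V) := h𝒟 _ (hF A V hV)
      have hsubAB : (V ∩ W) ∩ F A V ⊆ (A : Set X) ∩ (B : Set X) := by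
        rintro x ⟨⟨hxV, hxW⟩, hxD⟩
        exact ⟨hsub A (mem_biUnion hV ⟨hxV, hxD⟩),
          hsub B (mem_biUnion hW ⟨hxW, hFVW ▸ hxD⟩)⟩
      have hopVW : IsOpen (V ∩ W) := (hop A V hV).inter (hop B W hW)
      have hcl : V ∩ W ⊆ closure ((A : Set X) ∩ (B : Set X)) :=
        fun x hx => closure_mono hsubAB (hD.open_subset_closure_inter hopVW hx)
      have hnd : interior (closure ((A : Set X) ∩ (B : Set X))) = ∅ :=
        hnwd A A.2 B B.2 (fun h => hAB (Subtype.ext h))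
      have hsubint : V ∩ W ⊆ interior (closure ((A : Set X) ∩ (B : Set X))) :=
        hopVW.subset_interior_iff.mpr hcl
      rw [hnd] at hsubint
      exact hVW.ne_empty (subset_empty_iff.mp hsubint)
    by_cases hinf : ℵ₀ ≤ #↥𝒟
    · -- infinite case: pigeonhole onto `𝒟`
      have hVne : ∀ A : ↥𝒮, ∃ V ∈ 𝒱 A, V.Nonempty := by
        intro A
        obtain ⟨x, hx⟩ := (hdu A).nonempty
        obtain ⟨V, hV, hxV⟩ := hx
        exact ⟨V, hV, x, hxV⟩
      choose V0 hV0 hV0ne using hVne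
      let g : ↥𝒮 → ↥𝒟 := fun A => ⟨F A (V0 A), hF A _ (hV0 A)⟩
      obtain ⟨D, hD⟩ := Cardinal.infinite_pigeonhole_card g (Order.succ (#↥𝒟))
        (le_of_eq hcard.symm) (hinf.trans (Order.le_succ _))
        (by rw [(Cardinal.isRegular_succ hinf).cof_eq]; exact Order.lt_succ _)
      set P : Set ↥𝒮 := g ⁻¹' {D} with hP
      have hgeq : ∀ A ∈ P, ∀ B ∈ P, F A (V0 A) = F B (V0 B) := by
        intro A hA B hB
        have : g A = g B := by
          simp only [hP, mem_preimage, mem_singleton_iff] at hA hB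
          rw [hA, hB]
        exact congrArg Subtype.val this
      have hinj : InjOn (fun A => V0 A) P := by
        intro A hA B hB hVAB
        by_contra hAB
        have hemp := pair A B hAB (V0 A) (hV0 A) (V0 B) (hV0 B) (hgeq A hA B hB)
        simp only at hVAB
        rw [hVAB, inter_self] at hemp
        exact (hV0ne B).ne_empty hemp
      have hdisjU : ((fun A => V0 A) '' P).PairwiseDisjoint id := by
        rintro _ ⟨A, hA, rfl⟩ _ ⟨B, hB, rfl⟩ hne
        have hAB : A ≠ B := fun h => hne (by rw [h])
        have hemp := pair A B hAB (V0 A) (hV0 A) (V0 B) (hV0 B) (hgeq A hA B hB)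
        exact Set.disjoint_iff_inter_eq_empty.mpr hemp
      have hcardU : #↥((fun A => V0 A) '' P) = #↥P :=
        Cardinal.mk_image_eq_of_injOn _ _ hinj
      have hlt : #↥((fun A => V0 A) '' P) < hatc X := by
        refine lt_hatc _ ?_ hdisjU
        rintro _ ⟨A, hA, rfl⟩
        exact ⟨hop A _ (hV0 A), hV0ne A⟩
      have hge : hatc X ≤ #↥((fun A => V0 A) '' P) := by
        rw [hcardU]; exact hc.trans hD
      exact absurd hlt (not_lt.mpr hge)
    · -- finite case: pick a point in all the dense open unions
      have hDfin : #↥𝒟 < ℵ₀ := not_le.mp hinf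
      obtain ⟨n, hn⟩ := Cardinal.lt_aleph0.mp hDfin
      have hSfin : Finite ↥𝒮 := by
        rw [← Cardinal.lt_aleph0_iff_finite, hcard, hn, ← Cardinal.nat_succ]
        exact Cardinal.nat_lt_aleph0 _
      have hxd : Dense (⋂ A : ↥𝒮, ⋃₀ 𝒱 A) :=
        dense_iInter_fin (fun A => isOpen_sUnion (hop A)) hdu
      obtain ⟨x, hx⟩ := hxd.nonempty
      have hmem : ∀ A : ↥𝒮, ∃ V ∈ 𝒱 A, x ∈ V :=
        fun A => mem_sUnion.mp (mem_iInter.mp hx A)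
      choose V0 hV0 hxV0 using hmem
      let g : ↥𝒮 → ↥𝒟 := fun A => ⟨F A (V0 A), hF A _ (hV0 A)⟩
      have hni : ¬ Function.Injective g := by
        intro hg
        have h1 := Cardinal.mk_le_of_injective hg
        rw [hcard] at h1
        exact absurd h1 (not_le.mpr (Order.lt_succ _))
      obtain ⟨A, B, hgAB, hAB⟩ := Function.not_injective_iff.mp hni
      have hemp := pair A B hAB (V0 A) (hV0 A) (V0 B) (hV0 B)
        (congrArg Subtype.val hgAB)
      exact absurd hemp (Set.Nonempty.ne_empty ⟨x, hxV0 A, hxV0 B⟩)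
  refine ⟨hmain, fun hR => hmain ?_⟩
  obtain ⟨𝒮, hcard, hdisj, hsub⟩ := hR
  refine ⟨𝒮, hcard, fun A hA => ?_, fun A hA B hB hAB => ?_⟩
  · rw [dense_iff_closure_eq]
    exact eq_univ_of_univ_subset (hsub A hA).2
  · have h0 : A ∩ B = ∅ :=
      Set.disjoint_iff_inter_eq_empty.mp (hdisj hA hB hAB)
    show interior (closure (A ∩ B)) = ∅
    rw [h0, closure_empty, interior_empty]
end

section
/- Let D be a family of dense subsets of a space X and M = ⋃{V ∩ D_V : V ∈ V} a partial D-mosaic (V a disjoint family of nonempty open sets, D_V ∈ D). If each D_V, as a subspace, is μ-resolvable, then M is μ-resolvable. -/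
/-
Resolve each `D_V` into `μ` disjoint pieces `s V i` indexed by one fixed set of size `μ`, and
glue the `i`-th pieces across the mosaic: `Tᵢ = ⋃ V ∈ 𝒱, V ∩ s V i`. Disjointness of the tiles
and of the pieces makes the `Tᵢ` disjoint; since each `V` is open, `V ∩ D_V ⊆ closure (V ∩ s V i)`,
so every `Tᵢ` is dense in `M`; and since `D_V` is dense in `X`, so is `s V i`, which makes every
`Tᵢ` nonempty and hence the `Tᵢ` distinct.
-/

open Cardinal Set

universe u

variable {X : Type u} [TopologicalSpace X]

open Function

section Resolvability

variable {μ : Cardinal.{u}} {A : Set X} {ι : Type u}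

theorem ResolvCard.exists_pairwise_disjoint (h : ResolvCard μ A) (hι : #ι = μ) :
    ∃ s : ι → Set X, Pairwise (Disjoint on s) ∧ ∀ i, s i ⊆ A ∧ A ⊆ closure (s i) := by
  obtain ⟨𝒮, hcard, hdisj, hdense⟩ := h
  obtain ⟨e⟩ : Nonempty (ι ≃ 𝒮) := Cardinal.eq.1 (hι.trans hcard.symm)
  refine ⟨fun i => e i, fun i j hij => ?_, fun i => hdense _ (e i).2⟩
  exact hdisj (e i).2 (e j).2 fun h => hij (e.injective (Subtype.ext h))

theorem resolvCard_of_pairwise_disjoint (hι : #ι = μ) (s : ι → Set X)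
    (hdisj : Pairwise (Disjoint on s)) (hne : ∀ i, (s i).Nonempty)
    (hdense : ∀ i, s i ⊆ A ∧ A ⊆ closure (s i)) : ResolvCard μ A := by
  have hinj : Injective s := fun i j hij => by
    by_contra h
    obtain ⟨x, hx⟩ := hne i
    exact (hdisj h).le_bot ⟨hx, hij ▸ hx⟩
  refine ⟨range s, ?_, hdisj.range_pairwise, forall_mem_range.2 hdense⟩
  rw [mk_range_eq s hinj, hι]

end Resolvability

theorem pairwise_disjoint_biUnion_inter {α ι : Type*} {𝒱 : Set (Set α)}
    (h𝒱 : 𝒱.PairwiseDisjoint id) {s : Set α → ι → Set α}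
    (hs : ∀ V ∈ 𝒱, Pairwise (Disjoint on s V)) :
    Pairwise (Disjoint on fun i => ⋃ V ∈ 𝒱, V ∩ s V i) := by
  intro i j hij
  simp only [onFun, disjoint_iUnion₂_left, disjoint_iUnion₂_right]
  intro W hW V hV
  rcases eq_or_ne V W with rfl | hVW
  · exact (hs V hV hij).mono inter_subset_right inter_subset_right
  · exact (h𝒱 hV hW hVW).mono inter_subset_left inter_subset_left

theorem biUnion_inter_subset_closure {𝒱 : Set (Set X)} (h𝒱 : ∀ V ∈ 𝒱, IsOpen V)
    {A t : Set X → Set X} (ht : ∀ V ∈ 𝒱, A V ⊆ closure (t V)) :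
    ⋃ V ∈ 𝒱, V ∩ A V ⊆ closure (⋃ V ∈ 𝒱, V ∩ t V) :=
  iUnion₂_subset fun V hV =>
    calc V ∩ A V ⊆ V ∩ closure (t V) := inter_subset_inter_right V (ht V hV)
      _ ⊆ closure (V ∩ t V) := (h𝒱 V hV).inter_closure
      _ ⊆ closure (⋃ V ∈ 𝒱, V ∩ t V) :=
        closure_mono (subset_biUnion_of_mem (u := fun V => V ∩ t V) hV)

/-- If `M = ⋃ {V ∩ D_V : V ∈ 𝒱}` is a partial `𝒟`-mosaic (with `𝒱` a nonempty disjoint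
family of nonempty open sets, `D_V ∈ 𝒟`) and each `D_V` is `μ`-resolvable as a
subspace, then so is `M`. -/
theorem stmt_10 (𝒟 : Set (Set X)) (h𝒟 : ∀ D ∈ 𝒟, Dense D) (μ : Cardinal.{u})
    (𝒱 : Set (Set X)) (h𝒱 : ∀ V ∈ 𝒱, IsOpen V ∧ V.Nonempty)
    (hdisj : 𝒱.PairwiseDisjoint id) (h𝒱ne : 𝒱.Nonempty)
    (f : Set X → Set X) (hf : ∀ V ∈ 𝒱, f V ∈ 𝒟)
    (hres : ∀ V ∈ 𝒱, ResolvCard μ (f V)) :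
    ResolvCard μ (⋃ V ∈ 𝒱, V ∩ f V) := by
  have hpieces : ∀ V, ∃ s : μ.out → Set X, V ∈ 𝒱 →
      Pairwise (Disjoint on s) ∧ ∀ i, s i ⊆ f V ∧ f V ⊆ closure (s i) := fun V => by
    by_cases hV : V ∈ 𝒱
    · obtain ⟨s, hs⟩ := (hres V hV).exists_pairwise_disjoint (mk_out μ)
      exact ⟨s, fun _ => hs⟩
    · exact ⟨fun _ => ∅, fun h => absurd h hV⟩
  choose s hs using hpieces
  obtain ⟨V₀, hV₀⟩ := h𝒱ne
  refine resolvCard_of_pairwise_disjoint (mk_out μ) (fun i => ⋃ V ∈ 𝒱, V ∩ s V i)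
    (pairwise_disjoint_biUnion_inter hdisj fun V hV => (hs V hV).1) (fun i => ?_)
    fun i => ⟨biUnion_mono subset_rfl fun V hV => inter_subset_inter_right V ((hs V hV).2 i).1,
      biUnion_inter_subset_closure (fun V hV => (h𝒱 V hV).1) fun V hV => ((hs V hV).2 i).2⟩
  have hs₀ : Dense (s V₀ i) := ((h𝒟 _ (hf V₀ hV₀)).mono ((hs V₀ hV₀).2 i).2).of_closure
  obtain ⟨x, hx⟩ := hs₀.inter_open_nonempty V₀ (h𝒱 V₀ hV₀).1 (h𝒱 V₀ hV₀).2
  exact ⟨x, mem_biUnion hV₀ hx⟩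
end

section
/- Let X be a D-forced space in which every crowded (dense-in-itself) subspace is somewhere dense. Then for every crowded S ⊆ X there is a partial D-mosaic M ⊆ S that is dense in the subspace S. -/
/-!
Take, by Zorn's lemma, a maximal disjoint family `𝒱` of nonempty open sets `V` each carrying a
`𝒟`-piece `V ∩ D_V ⊆ S`, and let `M = ⋃ V ∩ D_V`. Since each `D_V` is dense, `closure M ⊇ ⋃ 𝒱`.
If some point of `S` lay outside `closure M`, then `S \ closure M` would be a nonempty crowded set,
hence somewhere dense, hence (as `X` is `𝒟`-forced) it would contain a `𝒟`-piece `U ∩ D`; shrinking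
`U` into the complement of `closure M` produces a set that could be added to `𝒱`.
-/

open Cardinal Set

universe u

variable {X : Type u} [TopologicalSpace X]

/-- A partial `(𝒟,X)`-mosaic: the disjoint open family is not required to be maximal. -/
def IsPartialMosaic (𝒟 : Set (Set X)) (M : Set X) : Prop :=
  ∃ (𝒱 : Set (Set X)) (f : Set X → Set X),
    (∀ V ∈ 𝒱, IsOpen V ∧ V.Nonempty) ∧ 𝒱.PairwiseDisjoint id ∧
    (∀ V ∈ 𝒱, f V ∈ 𝒟) ∧ M = ⋃ V ∈ 𝒱, V ∩ f V

theorem preperfect_iff_forall_mem_closure_diff_singleton {C : Set X} :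
    Preperfect C ↔ ∀ x ∈ C, x ∈ closure (C \ {x}) := by
  simp only [Preperfect, accPt_principal_iff_clusterPt, mem_closure_iff_clusterPt]

theorem exists_maximal_pairwiseDisjoint {α : Type*} (P : Set α → Prop) :
    ∃ 𝒱 : Set (Set α), Maximal (fun 𝒲 => (∀ V ∈ 𝒲, P V) ∧ 𝒲.PairwiseDisjoint id) 𝒱 := by
  refine zorn_subset _ fun c hc hchain => ⟨⋃₀ c, ⟨?_, ?_⟩, fun _ => subset_sUnion_of_mem⟩
  · rintro V ⟨𝒲, h𝒲, hV⟩
    exact (hc h𝒲).1 V hV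
  · exact (hchain.pairwiseDisjoint_sUnion id).2 fun 𝒲 h𝒲 => (hc h𝒲).2

theorem Maximal.not_disjoint_sUnion {α : Type*} {P : Set α → Prop} {𝒱 : Set (Set α)}
    (h𝒱 : Maximal (fun 𝒲 => (∀ V ∈ 𝒲, P V) ∧ 𝒲.PairwiseDisjoint id) 𝒱) {U : Set α}
    (hU : P U) (hne : U.Nonempty) : ¬ Disjoint U (⋃₀ 𝒱) := by
  intro hdisj
  have hins : (∀ V ∈ insert U 𝒱, P V) ∧ (insert U 𝒱).PairwiseDisjoint id := by
    refine ⟨forall_mem_insert.2 ⟨hU, h𝒱.prop.1⟩, h𝒱.prop.2.insert fun V hV _ => ?_⟩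
    exact hdisj.mono_right (subset_sUnion_of_mem hV)
  have hU𝒱 : U ∈ 𝒱 := h𝒱.2 hins (subset_insert U 𝒱) (mem_insert U 𝒱)
  exact hne.ne_empty (disjoint_self.1 (hdisj.mono_right (subset_sUnion_of_mem hU𝒱)))

theorem sUnion_subset_closure_biUnion_inter {𝒱 : Set (Set X)} {f : Set X → Set X}
    (hopen : ∀ V ∈ 𝒱, IsOpen V) (hdense : ∀ V ∈ 𝒱, Dense (f V)) :
    ⋃₀ 𝒱 ⊆ closure (⋃ V ∈ 𝒱, V ∩ f V) :=
  sUnion_subset fun V hV => ((hdense V hV).open_subset_closure_inter (hopen V hV)).trans <|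
    closure_mono (subset_biUnion_of_mem (u := fun V => V ∩ f V) hV)

namespace DForced

variable {𝒟 : Set (Set X)}

theorem exists_piece_subset (hf : DForced 𝒟) {T : Set X} (hT : ¬ IsNowhereDense T) :
    ∃ U : Set X, IsOpen U ∧ U.Nonempty ∧ ∃ D ∈ 𝒟, U ∩ D ⊆ T := by
  have hdense : Dense (T ∪ (closure T)ᶜ) := by
    rw [dense_iff_closure_eq, closure_union, eq_univ_iff_forall]
    intro x
    by_cases hx : x ∈ closure T
    · exact Or.inl hx
    · exact Or.inr (subset_closure hx)
  obtain ⟨M, hMT, 𝒱, f, hopen, -, h𝒱dense, hf𝒟, rfl⟩ := hf _ hdense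
  obtain ⟨x, hxW, V, hV, hxV⟩ :=
    h𝒱dense.inter_open_nonempty _ isOpen_interior (nonempty_iff_ne_empty.2 hT)
  refine ⟨V ∩ interior (closure T), (hopen V hV).inter isOpen_interior, ⟨x, hxV, hxW⟩,
    f V, hf𝒟 V hV, ?_⟩
  rintro y ⟨⟨hyV, hyW⟩, hyD⟩
  exact (hMT (mem_biUnion hV ⟨hyV, hyD⟩)).resolve_right
    fun hy => hy (interior_subset hyW)

theorem exists_piece_subset_of_preperfect (h𝒟 : ∀ D ∈ 𝒟, Dense D) (hf : DForced 𝒟)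
    (hcr : ∀ S : Set X, S.Nonempty → Preperfect S → ¬ IsNowhereDense S)
    {S O : Set X} (hS : Preperfect S) (hO : IsOpen O) (hSO : (S ∩ O).Nonempty) :
    ∃ U : Set X, IsOpen U ∧ U.Nonempty ∧ U ⊆ O ∧ ∃ D ∈ 𝒟, U ∩ D ⊆ S := by
  have hOS : (O ∩ S).Nonempty := by rwa [inter_comm]
  obtain ⟨U, hU, hUne, D, hD, hUD⟩ := hf.exists_piece_subset (hcr _ hOS (hS.open_inter hO))
  obtain ⟨z, hzU, hzD⟩ := (h𝒟 D hD).inter_open_nonempty U hU hUne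
  refine ⟨U ∩ O, hU.inter hO, ⟨z, hzU, (hUD ⟨hzU, hzD⟩).1⟩, inter_subset_right, D, hD, ?_⟩
  exact fun y hy => (hUD ⟨hy.1.1, hy.2⟩).2

end DForced

/-- If `X` is `𝒟`-forced and every nonempty crowded subspace of `X` is somewhere dense,
then every crowded `S ⊆ X` includes a partial `𝒟`-mosaic that is dense in `S`. -/
theorem stmt_11 (𝒟 : Set (Set X)) (h𝒟 : ∀ D ∈ 𝒟, Dense D) (hf : DForced 𝒟)
    (hcr : ∀ S : Set X, S.Nonempty → (∀ x ∈ S, x ∈ closure (S \ {x})) →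
      ¬ IsNowhereDense S) :
    ∀ S : Set X, (∀ x ∈ S, x ∈ closure (S \ {x})) →
      ∃ M ⊆ S, IsPartialMosaic 𝒟 M ∧ S ⊆ closure M := by
  simp only [← preperfect_iff_forall_mem_closure_diff_singleton] at hcr ⊢
  intro S hS
  obtain ⟨𝒱, h𝒱⟩ :=
    exists_maximal_pairwiseDisjoint fun V => IsOpen V ∧ V.Nonempty ∧ ∃ D ∈ 𝒟, V ∩ D ⊆ S
  obtain ⟨h𝒱P, h𝒱disj⟩ := h𝒱.prop
  choose! f hf𝒟 hfS using fun V hV => (h𝒱P V hV).2.2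
  have hcover : ⋃₀ 𝒱 ⊆ closure (⋃ V ∈ 𝒱, V ∩ f V) :=
    sUnion_subset_closure_biUnion_inter (fun V hV => (h𝒱P V hV).1) fun V hV => h𝒟 _ (hf𝒟 V hV)
  refine ⟨_, iUnion₂_subset hfS,
    ⟨𝒱, f, fun V hV => ⟨(h𝒱P V hV).1, (h𝒱P V hV).2.1⟩, h𝒱disj, hf𝒟, rfl⟩, fun x hxS => ?_⟩
  by_contra hx
  obtain ⟨U, hU, hUne, hUO, hUpiece⟩ := hf.exists_piece_subset_of_preperfect h𝒟 hcr hS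
    isClosed_closure.isOpen_compl ⟨x, hxS, hx⟩
  exact h𝒱.not_disjoint_sUnion ⟨hU, hUne, hUpiece⟩ hUne
    (disjoint_compl_left.mono hUO hcover)
end

section
/- For infinite cardinals κ and λ, up to homeomorphism there is a one-to-one correspondence between dense subspaces X of the Cantor cube D(2)^λ of size κ and spaces of the form X_B = ⟨κ, τ_B⟩ where B = {⟨B_ξ^0, B_ξ^1⟩ : ξ < λ} is a separating and independent family of 2-partitions of κ; moreover X is μ-dense in D(2)^λ iff B is μ-independent. -/
open Cardinal Set

universe u

/-- The family of 2-partitions encoded by `b` is separating. -/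
def Separating {K L : Type u} (b : L → K → Bool) : Prop :=
  ∀ a a' : K, a ≠ a' → ∃ ξ : L, b ξ a ≠ b ξ a'

/-- The family of 2-partitions encoded by `b` is independent: every finite Boolean
pattern is realized. -/
def Independent {K L : Type u} (b : L → K → Bool) : Prop :=
  ∀ (s : Finset L) (ε : L → Bool), {a : K | ∀ ξ ∈ s, b ξ a = ε ξ}.Nonempty

/-- `μ`-independence: every finite Boolean pattern is realized by at least `μ` points. -/
def MuIndependent {K L : Type u} (b : L → K → Bool) (μ : Cardinal.{u}) : Prop :=
  ∀ (s : Finset L) (ε : L → Bool), μ ≤ #↥{a : K | ∀ ξ ∈ s, b ξ a = ε ξ}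

/-- The topology `τ_B` on `K` generated by the subbase `{B_ξ^i : ξ ∈ L, i ∈ 2}`. -/
def tauB {K L : Type u} (b : L → K → Bool) : TopologicalSpace K :=
  TopologicalSpace.generateFrom {S : Set K | ∃ (ξ : L) (i : Bool), S = {a | b ξ a = i}}

/-- The natural map from `K` into the Cantor cube `D(2)^L`. -/
def eMap {K L : Type u} (b : L → K → Bool) : K → (L → Bool) := fun a ξ => b ξ a

/-- `A` is `μ`-dense: it meets every nonempty open set in at least `μ` points. -/
def MuDense {Y : Type u} [TopologicalSpace Y] (A : Set Y) (μ : Cardinal.{u}) : Prop :=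
  ∀ U : Set Y, IsOpen U → U.Nonempty → μ ≤ #↥(A ∩ U)

/-!
Send `a : K` to its pattern `ξ ↦ b ξ a` in the Cantor cube. The cylinders form a base of the
cube, and the image meets the cylinder of `(s, ε)` exactly in the image of `B[ε]`; hence the
image is dense iff every `B[ε]` is nonempty, and, once the map is injective (i.e. `B` is
separating), it is `μ`-dense iff every `B[ε]` has at least `μ` points. `τ_B` is the topology
pulled back along the map, since the sets `B_ξ^i` are the preimages of the subbasic clopen
sets of the cube. Conversely, the coordinates of a bijection `K ≃ S` onto a dense `S` form
a family with image `S`.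
-/

open SymbolicDynamics.FullShift

section Cylinders

variable {G A : Type*}

lemma self_mem_cylinder (s : Finset G) (x : G → A) : x ∈ cylinder s x :=
  mem_cylinder.2 fun _ _ => rfl

variable [TopologicalSpace A]

lemma exists_cylinder_subset_of_isOpen {U : Set (G → A)} (hU : IsOpen U) {x : G → A}
    (hx : x ∈ U) : ∃ s : Finset G, cylinder s x ⊆ U := by
  obtain ⟨s, u, hu, hsu⟩ := isOpen_pi_iff.1 hU x hx
  refine ⟨s, fun y hy => hsu fun i hi => ?_⟩
  rw [mem_cylinder.1 hy i hi]
  exact (hu i hi).2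

variable [DiscreteTopology A]

lemma dense_iff_forall_inter_cylinder_nonempty (S : Set (G → A)) :
    Dense S ↔ ∀ (s : Finset G) (x : G → A), (S ∩ cylinder s x).Nonempty := by
  refine ⟨fun h s x => ?_, fun h => dense_iff_inter_open.2 ?_⟩
  · rw [inter_comm]
    exact dense_iff_inter_open.1 h _ (isOpen_cylinder s x) ⟨x, self_mem_cylinder s x⟩
  · rintro U hU ⟨x, hx⟩
    obtain ⟨s, hs⟩ := exists_cylinder_subset_of_isOpen hU hx
    obtain ⟨y, hyS, hy⟩ := h s x
    exact ⟨y, hs hy, hyS⟩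

end Cylinders

universe v in
lemma muDense_iff_forall_le_mk_inter_cylinder {G : Type u} {A : Type v} [TopologicalSpace A]
    [DiscreteTopology A] (S : Set (G → A)) (μ : Cardinal.{max u v}) :
    MuDense S μ ↔ ∀ (s : Finset G) (x : G → A), μ ≤ #↥(S ∩ cylinder s x) := by
  refine ⟨fun h s x => h _ (isOpen_cylinder s x) ⟨x, self_mem_cylinder s x⟩, ?_⟩
  rintro h U hU ⟨x, hx⟩
  obtain ⟨s, hs⟩ := exists_cylinder_subset_of_isOpen hU hx
  exact (h s x).trans (mk_le_mk_of_subset (inter_subset_inter_right S hs))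

section Partitions

variable {K L : Type u} (b : L → K → Bool)

lemma separating_iff_injective_eMap : Separating b ↔ Function.Injective (eMap b) :=
  forall₂_congr fun a a' => by
    rw [not_imp_comm, ← Function.ne_iff, not_not]; rfl

lemma range_eMap_inter_cylinder (s : Finset L) (ε : L → Bool) :
    range (eMap b) ∩ cylinder s ε = eMap b '' {a | ∀ ξ ∈ s, b ξ a = ε ξ} :=
  (image_preimage_eq_range_inter).symm

lemma independent_iff_dense_range_eMap : Independent b ↔ Dense (range (eMap b)) := by
  simp only [dense_iff_forall_inter_cylinder_nonempty, range_eMap_inter_cylinder,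
    image_nonempty]
  rfl

lemma muIndependent_iff_muDense_range_eMap (hb : Separating b) (μ : Cardinal.{u}) :
    MuIndependent b μ ↔ MuDense (range (eMap b)) μ := by
  simp only [muDense_iff_forall_le_mk_inter_cylinder, range_eMap_inter_cylinder,
    mk_image_eq ((separating_iff_injective_eMap b).1 hb)]
  rfl

lemma tauB_eq_induced_eMap : tauB b = TopologicalSpace.induced (eMap b) inferInstance := by
  refine le_antisymm (continuous_iff_le_induced.1 ?_) (le_generateFrom ?_)
  · let := tauB b
    exact continuous_pi fun ξ => continuous_discrete_rng.2 fun i =>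
      TopologicalSpace.isOpen_generateFrom_of_mem ⟨ξ, i, rfl⟩
  · rintro _ ⟨ξ, i, rfl⟩
    have : IsOpen ((fun f : L → Bool => f ξ) ⁻¹' {i}) :=
      (isOpen_discrete _).preimage (continuous_apply ξ)
    exact isOpen_induced this

lemma exists_separating_range_eMap_eq {S : Set (L → Bool)} (hS : #S = #K) :
    ∃ b : L → K → Bool, Separating b ∧ range (eMap b) = S := by
  obtain ⟨e⟩ := Cardinal.eq.1 hS.symm
  refine ⟨fun ξ a => (e a : L → Bool) ξ,
    (separating_iff_injective_eMap _).2 (Subtype.val_injective.comp e.injective), ?_⟩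
  change range (Subtype.val ∘ e) = S
  rw [e.surjective.range_comp, Subtype.range_coe]

end Partitions

theorem stmt_13_general (κ : Cardinal.{u}) (K L : Type u) (hK : #K = κ) :
    (∀ b : L → K → Bool, Separating b → Independent b →
      Function.Injective (eMap b) ∧
      tauB b = TopologicalSpace.induced (eMap b) inferInstance ∧
      Dense (Set.range (eMap b)) ∧ #↥(Set.range (eMap b)) = κ) ∧
    (∀ S : Set (L → Bool), Dense S → #↥S = κ →
      ∃ b : L → K → Bool, Separating b ∧ Independent b ∧ Set.range (eMap b) = S) ∧
    (∀ b : L → K → Bool, Separating b → Independent b → ∀ μ : Cardinal.{u},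
      (MuIndependent b μ ↔ MuDense (Set.range (eMap b)) μ)) := by
  subst hK
  refine ⟨fun b hsep hind => ?_, fun S hS hcard => ?_,
    fun b hsep _ μ => muIndependent_iff_muDense_range_eMap b hsep μ⟩
  · have hinj := (separating_iff_injective_eMap b).1 hsep
    exact ⟨hinj, tauB_eq_induced_eMap b, (independent_iff_dense_range_eMap b).1 hind,
      mk_range_eq _ hinj⟩
  · obtain ⟨b, hsep, rfl⟩ := exists_separating_range_eMap_eq hcard
    exact ⟨b, hsep, (independent_iff_dense_range_eMap b).2 hS, rfl⟩

/-- The correspondence between dense subspaces of the Cantor cube `D(2)^λ` of size `κ`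
and spaces `X_B = ⟨κ, τ_B⟩` for separating independent families `B` of 2-partitions
of `κ`: (1) for each such `B` the natural map is a homeomorphism onto a dense size-`κ`
subspace; (2) every dense subspace of size `κ` arises this way; (3) `X_B` corresponds to
a `μ`-dense subspace iff `B` is `μ`-independent. -/
theorem stmt_13 (κ lam : Cardinal.{u}) (hκ : ℵ₀ ≤ κ) (hlam : ℵ₀ ≤ lam)
    (K L : Type u) (hK : #K = κ) (hL : #L = lam) :
    (∀ b : L → K → Bool, Separating b → Independent b →
      Function.Injective (eMap b) ∧
      tauB b = TopologicalSpace.induced (eMap b) inferInstance ∧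
      Dense (Set.range (eMap b)) ∧ #↥(Set.range (eMap b)) = κ) ∧
    (∀ S : Set (L → Bool), Dense S → #↥S = κ →
      ∃ b : L → K → Bool, Separating b ∧ Independent b ∧ Set.range (eMap b) = S) ∧
    (∀ b : L → K → Bool, Separating b → Independent b → ∀ μ : Cardinal.{u},
      (MuIndependent b μ ↔ MuDense (Set.range (eMap b)) μ)) :=
  stmt_13_general κ K L hK
end

section
/- Let κ be an infinite cardinal, S ⊆ D(2)^κ dense, and suppose there is a partition {I_ν : ν < κ} of κ into countably infinite sets such that for each ν, the projection S↾I_ν is co-dense in 2^{I_ν} (i.e. 2^{I_ν} \ (S↾I_ν) is dense). Then S is homeomorphic to a dense subspace of the irrational cube P^κ (P the irrationals), and hence to a dense subspace of [0,1]^κ. -/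
open Cardinal Set
open Topology

noncomputable section

namespace Stmt15

/-! ### A ℤ-indexed grid on an interval -/

def wz (j : ℤ) : ℝ := 2 ^ j / (1 + 2 ^ j)

lemma two_zpow_pos (j : ℤ) : (0:ℝ) < 2 ^ j := zpow_pos (by norm_num) j

lemma wz_pos (j : ℤ) : 0 < wz j :=
  div_pos (two_zpow_pos j) (by have := two_zpow_pos j; linarith)

lemma wz_lt_one (j : ℤ) : wz j < 1 := by
  rw [wz, div_lt_one (by have := two_zpow_pos j; linarith)]
  linarith

lemma wz_mono : StrictMono wz := by
  intro j k h
  have hj := two_zpow_pos j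
  have hk := two_zpow_pos k
  have h2 : (2:ℝ) ^ j < 2 ^ k := zpow_lt_zpow_right₀ (by norm_num) h
  rw [wz, wz, div_lt_div_iff₀ (by linarith) (by linarith)]
  nlinarith

/-- Grid point `j` in the interval `(c, d)`. -/
def gpt (c d : ℝ) (j : ℤ) : ℝ := c + (d - c) * wz j

lemma gpt_mem {c d : ℝ} (h : c < d) (j : ℤ) : gpt c d j ∈ Ioo c d := by
  rw [gpt]
  constructor
  · nlinarith [wz_pos j]
  · nlinarith [wz_lt_one j]

lemma gpt_mono {c d : ℝ} (h : c < d) : StrictMono (gpt c d) := by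
  intro j k hjk
  have := wz_mono hjk
  rw [gpt, gpt]
  nlinarith

lemma gpt_gap {c d : ℝ} (h : c < d) (j : ℤ) :
    gpt c d (j + 1) - gpt c d j ≤ (d - c) / 2 := by
  have hz := two_zpow_pos j
  have hw : wz (j + 1) - wz j ≤ 1 / 2 := by
    rw [wz, wz, zpow_add_one₀ (two_ne_zero), div_sub_div _ _ (by linarith) (by linarith),
      div_le_div_iff₀ (by nlinarith) (by norm_num)]
    nlinarith
  rw [gpt, gpt]
  nlinarith

lemma gpt_cover {c d : ℝ} (h : c < d) {y : ℝ} (hy : y ∈ Ioo c d) :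
    ∃ j : ℤ, gpt c d j ≤ y ∧ y < gpt c d (j + 1) := by
  obtain ⟨hy1, hy2⟩ := hy
  set t : ℝ := (y - c) / (d - c) with ht
  have hdc : (0:ℝ) < d - c := by linarith
  have ht0 : 0 < t := div_pos (by linarith) hdc
  have ht1 : t < 1 := by rw [ht, div_lt_one hdc]; linarith
  have hc0 : 0 < t / (1 - t) := div_pos ht0 (by linarith)
  obtain ⟨j, h1, h2⟩ := exists_mem_Ico_zpow hc0 (by norm_num : (1:ℝ) < 2)
  have hj := two_zpow_pos j
  have hj1 := two_zpow_pos (j + 1)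
  have h1t : (0:ℝ) < 1 - t := by linarith
  have hmul : (2:ℝ) ^ j * (1 - t) ≤ t := (le_div_iff₀ h1t).mp h1
  have hmul2 : t < 2 ^ (j + 1) * (1 - t) := by
    have := (div_lt_iff₀ h1t).mp h2
    linarith
  have hyt : y = c + (d - c) * t := by rw [ht]; field_simp; ring
  refine ⟨j, ?_, ?_⟩
  · have hwt : wz j ≤ t := by
      rw [wz, div_le_iff₀ (by linarith)]
      nlinarith
    rw [gpt, hyt]
    nlinarith
  · have hwt : t < wz (j + 1) := by
      rw [wz, lt_div_iff₀ (by linarith)]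
      nlinarith
    rw [gpt, hyt]
    nlinarith

end Stmt15
namespace Stmt15

/-- Index equivalence for children of a non-root node. -/
def pidx : ℕ ≃ Bool × ℤ :=
  (Equiv.boolProdNatEquivNat.symm.trans
    (Equiv.prodCongr (Equiv.refl Bool) (Denumerable.eqv ℤ).symm))

/-- Index equivalence for children of the root. -/
def zidx : ℕ ≃ ℤ := (Denumerable.eqv ℤ).symm

/-- The split point of `(a,b)` avoiding `r`. -/
def rmid (a b r : ℝ) : ℝ := if r ∈ Ioo a b then r else (a + b) / 2

lemma rmid_mem {a b : ℝ} (h : a < b) (r : ℝ) : rmid a b r ∈ Ioo a b := by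
  rw [rmid]
  split
  · assumption
  · rw [mem_Ioo]; constructor <;> linarith

/-- The `n`-th child interval of `(a,b)`, avoiding `r`. -/
def splitI (a b r : ℝ) (n : ℕ) : ℝ × ℝ :=
  if (pidx n).1 then (gpt (rmid a b r) b (pidx n).2, gpt (rmid a b r) b ((pidx n).2 + 1))
  else (gpt a (rmid a b r) (pidx n).2, gpt a (rmid a b r) ((pidx n).2 + 1))

lemma splitI_eq_true {a b r : ℝ} {n : ℕ} (hn : (pidx n).1 = true) :
    splitI a b r n = (gpt (rmid a b r) b (pidx n).2, gpt (rmid a b r) b ((pidx n).2 + 1)) := by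
  rw [splitI, if_pos hn]

lemma splitI_eq_false {a b r : ℝ} {n : ℕ} (hn : (pidx n).1 = false) :
    splitI a b r n = (gpt a (rmid a b r) (pidx n).2, gpt a (rmid a b r) ((pidx n).2 + 1)) := by
  rw [splitI, if_neg (by simp [hn])]

lemma splitI_lt {a b : ℝ} (h : a < b) (r : ℝ) (n : ℕ) :
    (splitI a b r n).1 < (splitI a b r n).2 := by
  obtain ⟨h1, h2⟩ := rmid_mem h r
  rcases Bool.eq_false_or_eq_true (pidx n).1 with hn | hn
  · rw [splitI_eq_true hn]; exact gpt_mono h2 (lt_add_one _)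
  · rw [splitI_eq_false hn]; exact gpt_mono h1 (lt_add_one _)

lemma splitI_subset {a b : ℝ} (h : a < b) (r : ℝ) (n : ℕ) :
    Ioo (splitI a b r n).1 (splitI a b r n).2 ⊆
      if (pidx n).1 then Ioo (rmid a b r) b else Ioo a (rmid a b r) := by
  obtain ⟨h1, h2⟩ := rmid_mem h r
  rcases Bool.eq_false_or_eq_true (pidx n).1 with hn | hn
  · rw [splitI_eq_true hn, if_pos hn]
    exact Ioo_subset_Ioo (gpt_mem h2 _).1.le (gpt_mem h2 _).2.le
  · rw [splitI_eq_false hn, if_neg (by simp [hn])]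
    exact Ioo_subset_Ioo (gpt_mem h1 _).1.le (gpt_mem h1 _).2.le

lemma splitI_subset' {a b : ℝ} (h : a < b) (r : ℝ) (n : ℕ) :
    Ioo (splitI a b r n).1 (splitI a b r n).2 ⊆ Ioo a b := by
  refine (splitI_subset h r n).trans ?_
  obtain ⟨h1, h2⟩ := rmid_mem h r
  split
  · exact Ioo_subset_Ioo h1.le le_rfl
  · exact Ioo_subset_Ioo le_rfl h2.le

lemma splitI_nested {a b : ℝ} (h : a < b) (r : ℝ) (n : ℕ) :
    a < (splitI a b r n).1 ∧ (splitI a b r n).2 < b := by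
  obtain ⟨h1, h2⟩ := rmid_mem h r
  rcases Bool.eq_false_or_eq_true (pidx n).1 with hn | hn
  · rw [splitI_eq_true hn]; exact ⟨lt_trans h1 (gpt_mem h2 _).1, (gpt_mem h2 _).2⟩
  · rw [splitI_eq_false hn]; exact ⟨(gpt_mem h1 _).1, lt_trans (gpt_mem h1 _).2 h2⟩

lemma splitI_width {a b : ℝ} (h : a < b) (r : ℝ) (n : ℕ) :
    (splitI a b r n).2 - (splitI a b r n).1 ≤ (b - a) / 2 := by
  obtain ⟨h1, h2⟩ := rmid_mem h r
  rcases Bool.eq_false_or_eq_true (pidx n).1 with hn | hn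
  · rw [splitI_eq_true hn]; have := gpt_gap h2 (pidx n).2; dsimp only; linarith
  · rw [splitI_eq_false hn]; have := gpt_gap h1 (pidx n).2; dsimp only; linarith

lemma splitI_avoid {a b : ℝ} (h : a < b) (r : ℝ) (n : ℕ) :
    r ∉ Ioo (splitI a b r n).1 (splitI a b r n).2 := by
  intro hr
  have hsub := splitI_subset h r n hr
  by_cases hmem : r ∈ Ioo a b
  · have hr' : rmid a b r = r := if_pos hmem
    split at hsub
    · rw [hr'] at hsub; exact lt_irrefl r hsub.1
    · rw [hr'] at hsub; exact lt_irrefl r hsub.2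
  · split at hsub
    · exact hmem ⟨lt_trans (rmid_mem h r).1 hsub.1, hsub.2⟩
    · exact hmem ⟨hsub.1, lt_trans hsub.2 (rmid_mem h r).2⟩

lemma Ioo_gpt_disjoint {c d : ℝ} (hcd : c < d) {j k : ℤ} (hjk : j ≠ k) :
    Disjoint (Ioo (gpt c d j) (gpt c d (j + 1))) (Ioo (gpt c d k) (gpt c d (k + 1))) := by
  rw [Set.disjoint_left]
  intro x hj hk
  rcases lt_or_gt_of_ne hjk with hlt | hlt
  · have : gpt c d (j + 1) ≤ gpt c d k := (gpt_mono hcd).monotone (by omega)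
    exact absurd (lt_of_lt_of_le hj.2 this) (not_lt.mpr hk.1.le)
  · have : gpt c d (k + 1) ≤ gpt c d j := (gpt_mono hcd).monotone (by omega)
    exact absurd (lt_of_lt_of_le hk.2 this) (not_lt.mpr hj.1.le)

lemma splitI_disjoint {a b : ℝ} (h : a < b) (r : ℝ) {m n : ℕ} (hmn : m ≠ n) :
    Disjoint (Ioo (splitI a b r m).1 (splitI a b r m).2)
      (Ioo (splitI a b r n).1 (splitI a b r n).2) := by
  obtain ⟨h1, h2⟩ := rmid_mem h r
  have hpne : pidx m ≠ pidx n := fun hc => hmn (pidx.injective hc)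
  by_cases hb : (pidx m).1 = (pidx n).1
  · have hz : (pidx m).2 ≠ (pidx n).2 := by
      intro hc; exact hpne (Prod.ext hb hc)
    rcases Bool.eq_false_or_eq_true (pidx m).1 with hm1 | hm1
    · rw [splitI_eq_true hm1, splitI_eq_true (hb ▸ hm1)]
      exact Ioo_gpt_disjoint h2 hz
    · rw [splitI_eq_false hm1, splitI_eq_false (hb ▸ hm1)]
      exact Ioo_gpt_disjoint h1 hz
  · rw [Set.disjoint_left]
    intro x hxm hxn
    have hm' := splitI_subset h r m hxm
    have hn' := splitI_subset h r n hxn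
    rcases Bool.eq_false_or_eq_true (pidx m).1 with hm1 | hm1 <;>
      rcases Bool.eq_false_or_eq_true (pidx n).1 with hn1 | hn1
    · exact hb (hm1.trans hn1.symm)
    · rw [if_pos hm1] at hm'
      rw [if_neg (by simp [hn1])] at hn'
      exact absurd hm'.1 (not_lt.mpr hn'.2.le)
    · rw [if_neg (by simp [hm1])] at hm'
      rw [if_pos hn1] at hn'
      exact absurd hn'.1 (not_lt.mpr hm'.2.le)
    · exact hb (hm1.trans hn1.symm)

lemma splitI_dense {a b : ℝ} (h : a < b) (r : ℝ) :
    Ioo a b ⊆ closure (⋃ n, Ioo (splitI a b r n).1 (splitI a b r n).2) := by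
  obtain ⟨h1, h2⟩ := rmid_mem h r
  set U := ⋃ n, Ioo (splitI a b r n).1 (splitI a b r n).2 with hU
  have key : ∀ (β : Bool) (c d : ℝ), c < d →
      (∀ j : ℤ, splitI a b r (pidx.symm (β, j)) = (gpt c d j, gpt c d (j+1))) →
      Ioo c d ⊆ closure U := by
    intro β c d hcd hform y hy
    obtain ⟨j, hj1, hj2⟩ := gpt_cover hcd hy
    have hIcc : y ∈ Icc (gpt c d j) (gpt c d (j+1)) := ⟨hj1, hj2.le⟩
    have hcl : Icc (gpt c d j) (gpt c d (j+1)) = closure (Ioo (gpt c d j) (gpt c d (j+1))) :=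
      (closure_Ioo (ne_of_lt (gpt_mono hcd (lt_add_one _)))).symm
    have : y ∈ closure (Ioo (splitI a b r (pidx.symm (β, j))).1
        (splitI a b r (pidx.symm (β, j))).2) := by
      rw [hform j]; rw [hcl] at hIcc; exact hIcc
    exact closure_mono (subset_iUnion
      (fun n => Ioo (splitI a b r n).1 (splitI a b r n).2) (pidx.symm (β, j))) this
  have hleft : Ioo a (rmid a b r) ⊆ closure U := by
    refine key false a (rmid a b r) h1 (fun j => ?_)
    have : (pidx (pidx.symm (false, j))).1 = false := by rw [Equiv.apply_symm_apply]
    rw [splitI_eq_false this, Equiv.apply_symm_apply]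
  have hright : Ioo (rmid a b r) b ⊆ closure U := by
    refine key true (rmid a b r) b h2 (fun j => ?_)
    have : (pidx (pidx.symm (true, j))).1 = true := by rw [Equiv.apply_symm_apply]
    rw [splitI_eq_true this, Equiv.apply_symm_apply]
  intro y hy
  rcases lt_trichotomy y (rmid a b r) with hc | hc | hc
  · exact hleft ⟨hy.1, hc⟩
  · have hy' : y ∈ closure (Ioo a (rmid a b r)) := by
      rw [closure_Ioo (ne_of_lt h1)]
      exact ⟨by rw [hc]; exact h1.le, hc.le⟩
    have := closure_mono hleft hy'
    rwa [closure_closure] at this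
  · exact hright ⟨hc, hy.2⟩

end Stmt15
namespace Stmt15

/-- An enumeration of the rationals, as reals. -/
def rq (d : ℕ) : ℝ := ((Denumerable.eqv ℚ).symm d : ℚ)

lemma rq_surj (q : ℚ) : ∃ d, rq d = (q : ℝ) :=
  ⟨Denumerable.eqv ℚ q, by rw [rq, Equiv.symm_apply_apply]⟩

/-- The grid of the root subdivision of `ℝ`. -/
def tgrid (k : ℤ) : ℝ := rq 0 + k / 2

lemma tgrid_mono : StrictMono tgrid := fun j k h => by
  have : (j : ℝ) < k := by exact_mod_cast h
  rw [tgrid, tgrid]; push_cast; linarith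

def rootI (n : ℕ) : ℝ × ℝ := (tgrid (zidx n), tgrid (zidx n + 1))

lemma rootI_lt (n : ℕ) : (rootI n).1 < (rootI n).2 := tgrid_mono (lt_add_one _)

lemma rootI_width (n : ℕ) : (rootI n).2 - (rootI n).1 = 1 / 2 := by
  rw [rootI, tgrid, tgrid]; push_cast; ring

lemma rootI_avoid (n : ℕ) : rq 0 ∉ Ioo (rootI n).1 (rootI n).2 := by
  rintro ⟨h1, h2⟩
  rw [rootI] at h1 h2
  dsimp only at h1 h2
  rw [tgrid] at h1 h2
  set k := zidx n with hk
  push_cast at h1 h2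
  have h1' : k < 0 := by
    have : (k : ℝ) < 0 := by linarith
    exact_mod_cast this
  have h2' : (0 : ℤ) < k + 1 := by
    have : (0 : ℝ) < (k : ℝ) + 1 := by linarith
    exact_mod_cast this
  omega

lemma rootI_disjoint {m n : ℕ} (h : m ≠ n) :
    Disjoint (Ioo (rootI m).1 (rootI m).2) (Ioo (rootI n).1 (rootI n).2) := by
  rw [Set.disjoint_left]
  intro x hm hn
  have hz : zidx m ≠ zidx n := fun hc => h (zidx.injective hc)
  rcases lt_or_gt_of_ne hz with hlt | hlt
  · have : tgrid (zidx m + 1) ≤ tgrid (zidx n) := tgrid_mono.monotone (by omega)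
    exact absurd (lt_of_lt_of_le hm.2 this) (not_lt.mpr hn.1.le)
  · have : tgrid (zidx n + 1) ≤ tgrid (zidx m) := tgrid_mono.monotone (by omega)
    exact absurd (lt_of_lt_of_le hn.2 this) (not_lt.mpr hm.1.le)

lemma rootI_cover (y : ℝ) : ∃ n, (rootI n).1 ≤ y ∧ y < (rootI n).2 := by
  set k : ℤ := ⌊(y - rq 0) * 2⌋ with hk
  refine ⟨zidx.symm k, ?_, ?_⟩
  · rw [rootI]
    dsimp only
    rw [tgrid, Equiv.apply_symm_apply]
    have h := Int.floor_le ((y - rq 0) * 2)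
    rw [← hk] at h
    linarith
  · rw [rootI]
    dsimp only
    rw [tgrid, Equiv.apply_symm_apply]
    have h := Int.lt_floor_add_one ((y - rq 0) * 2)
    rw [← hk] at h
    push_cast
    linarith

/-- The interval attached to each node of the tree. -/
def ivl : List ℕ → ℝ × ℝ
  | [] => (0, 1)
  | [n] => rootI n
  | n :: m :: s => splitI (ivl (m :: s)).1 (ivl (m :: s)).2 (rq (m :: s).length) n

lemma ivl_lt : ∀ (s : List ℕ), s ≠ [] → (ivl s).1 < (ivl s).2
  | [], h => absurd rfl h
  | [n], _ => rootI_lt n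
  | n :: m :: s, _ => by
      rw [ivl]
      exact splitI_lt (ivl_lt (m :: s) (by simp)) _ _

lemma ivl_nested (n m : ℕ) (s : List ℕ) :
    (ivl (m :: s)).1 < (ivl (n :: m :: s)).1 ∧ (ivl (n :: m :: s)).2 < (ivl (m :: s)).2 := by
  rw [ivl]
  exact splitI_nested (ivl_lt (m :: s) (by simp)) _ _

lemma ivl_sub (n m : ℕ) (s : List ℕ) :
    Ioo (ivl (n :: m :: s)).1 (ivl (n :: m :: s)).2 ⊆ Ioo (ivl (m :: s)).1 (ivl (m :: s)).2 := by
  rw [ivl]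
  exact splitI_subset' (ivl_lt (m :: s) (by simp)) _ _

lemma ivl_width : ∀ (s : List ℕ), s ≠ [] → (ivl s).2 - (ivl s).1 ≤ (1 / 2) ^ s.length
  | [], h => absurd rfl h
  | [n], _ => by rw [ivl, rootI_width]; norm_num
  | n :: m :: s, _ => by
      have h1 := ivl_lt (m :: s) (by simp)
      have h2 := ivl_width (m :: s) (by simp)
      have h3 := splitI_width h1 (rq (m :: s).length) n
      rw [ivl]
      calc (splitI (ivl (m :: s)).1 (ivl (m :: s)).2 (rq (m :: s).length) n).2 -
            (splitI (ivl (m :: s)).1 (ivl (m :: s)).2 (rq (m :: s).length) n).1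
          ≤ ((ivl (m :: s)).2 - (ivl (m :: s)).1) / 2 := h3
        _ ≤ ((1 / 2) ^ (m :: s).length) / 2 := by linarith
        _ = (1 / 2) ^ (n :: m :: s).length := by
            simp only [List.length_cons]
            ring

lemma ivl_avoid (n : ℕ) (s : List ℕ) :
    rq s.length ∉ Ioo (ivl (n :: s)).1 (ivl (n :: s)).2 := by
  cases s with
  | nil => exact rootI_avoid n
  | cons m s =>
      rw [ivl]
      exact splitI_avoid (ivl_lt (m :: s) (by simp)) _ n

lemma ivl_disjoint : ∀ (s t : List ℕ), s.length = t.length → s ≠ [] → s ≠ t →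
    Disjoint (Ioo (ivl s).1 (ivl s).2) (Ioo (ivl t).1 (ivl t).2)
  | [], _, _, h, _ => absurd rfl h
  | _ :: _, [], hlen, _, _ => by simp at hlen
  | n :: s', k :: t', hlen, _, hne => by
      by_cases hst : s' = t'
      · subst hst
        have hnk : n ≠ k := fun hc => hne (by rw [hc])
        cases s' with
        | nil => exact rootI_disjoint hnk
        | cons m s'' =>
            rw [ivl, ivl]
            exact splitI_disjoint (ivl_lt (m :: s'') (by simp)) _ hnk
      · have hlen' : s'.length = t'.length := by simpa using hlen
        cases s' with
        | nil =>
            cases t' with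
            | nil => exact absurd rfl hst
            | cons _ _ => simp at hlen'
        | cons m s'' =>
            cases t' with
            | nil => simp at hlen'
            | cons m' t'' =>
                have IH := ivl_disjoint (m :: s'') (m' :: t'') hlen' (by simp) hst
                exact IH.mono (ivl_sub _ _ _) (ivl_sub _ _ _)

lemma ivl_dense : ∀ d : ℕ,
    Dense (⋃ (s : List ℕ) (_ : s.length = d + 1), Ioo (ivl s).1 (ivl s).2)
  | 0 => by
      intro y
      obtain ⟨n, h1, h2⟩ := rootI_cover y
      have : y ∈ closure (Ioo (ivl [n]).1 (ivl [n]).2) := by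
        rw [ivl, closure_Ioo (ne_of_lt (rootI_lt n))]
        exact ⟨h1, h2.le⟩
      refine closure_mono ?_ this
      exact subset_iUnion₂ (s := fun (s : List ℕ) (_ : s.length = 0 + 1) =>
        Ioo (ivl s).1 (ivl s).2) [n] (by simp)
  | d + 1 => by
      have hd := ivl_dense d
      have hsub : (⋃ (s : List ℕ) (_ : s.length = d + 1), Ioo (ivl s).1 (ivl s).2) ⊆
          closure (⋃ (s : List ℕ) (_ : s.length = d + 2), Ioo (ivl s).1 (ivl s).2) := by
        rintro x hx
        simp only [mem_iUnion] at hx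
        obtain ⟨s, hs, hxs⟩ := hx
        cases s with
        | nil => simp at hs
        | cons m s' =>
            have hx' := splitI_dense (ivl_lt (m :: s') (by simp)) (rq (m :: s').length) hxs
            refine closure_mono ?_ hx'
            refine iUnion_subset fun n => ?_
            have he : Ioo (splitI (ivl (m :: s')).1 (ivl (m :: s')).2 (rq (m :: s').length) n).1
                (splitI (ivl (m :: s')).1 (ivl (m :: s')).2 (rq (m :: s').length) n).2 =
                Ioo (ivl (n :: m :: s')).1 (ivl (n :: m :: s')).2 := by rw [ivl]
            rw [he]
            exact subset_iUnion₂ (s := fun (s : List ℕ) (_ : s.length = d + 2) =>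
              Ioo (ivl s).1 (ivl s).2) (n :: m :: s')
              (by simp only [List.length_cons] at hs ⊢; omega)
      intro y
      have hy := hd y
      have := closure_mono hsub hy
      rwa [closure_closure] at this

end Stmt15
namespace Stmt15

/-! ### Cylinders in the Cantor cube -/

def cylS (m : ℕ) (u : ℕ → Bool) : Set (ℕ → Bool) := {x | ∀ i < m, x i = u i}

lemma self_mem_cylS (m : ℕ) (u : ℕ → Bool) : u ∈ cylS m u := fun _ _ => rfl

lemma isOpen_cylS (m : ℕ) (u : ℕ → Bool) : IsOpen (cylS m u) := by
  have he : cylS m u = Set.pi (Set.Iio m) (fun i => {u i}) := by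
    ext x; simp [cylS, Set.pi, Set.mem_Iio]
  rw [he]
  exact isOpen_set_pi (Set.finite_Iio m) (fun i _ => isOpen_discrete _)

lemma not_countable_pi : ¬ (Set.univ : Set (ℕ → Bool)).Countable := by
  intro h
  have : Countable (ℕ → Bool) := Set.countable_univ_iff.mp h
  have h1 : #(ℕ → Bool) ≤ ℵ₀ := Cardinal.mk_le_aleph0_iff.mpr this
  have h2 : #(ℕ → Bool) = 2 ^ ℵ₀ := by
    rw [← Cardinal.power_def, Cardinal.mk_bool, Cardinal.mk_nat]
  rw [h2] at h1
  exact absurd h1 (not_le.mpr (Cardinal.cantor ℵ₀))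

lemma cylS_diff_nonempty {Q : Set (ℕ → Bool)} (hQc : Q.Countable) (m : ℕ) (u : ℕ → Bool) :
    (cylS m u \ Q).Nonempty := by
  rw [Set.nonempty_iff_ne_empty]
  intro hempty
  have hsub : cylS m u ⊆ Q := by
    intro x hx
    by_contra hxQ
    exact absurd hempty (Set.nonempty_iff_ne_empty.mp ⟨x, hx, hxQ⟩)
  -- build an injection of the full cube into the cylinder
  set g : (ℕ → Bool) → (ℕ → Bool) := fun z i => if i < m then u i else z (i - m) with hg
  have hginj : Function.Injective g := by
    intro z z' hzz
    funext i
    have := congrFun hzz (i + m)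
    simpa [hg, Nat.add_sub_cancel] using this
  have hgmem : ∀ z, g z ∈ cylS m u := by
    intro z i hi
    simp [hg, hi]
  have hrange : Set.range g ⊆ Q := fun y ⟨z, hz⟩ => hz ▸ hsub (hgmem z)
  have hcnt : (Set.range g).Countable := hQc.mono hrange
  have : (g ⁻¹' Set.range g).Countable := hcnt.preimage hginj
  rw [Set.preimage_range] at this
  exact not_countable_pi this

variable {Q : Set (ℕ → Bool)}

/-- A point of `Q` in the cylinder. -/
noncomputable def pick (hQd : Dense Q) (m : ℕ) (u : ℕ → Bool) : ℕ → Bool :=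
  (hQd.inter_open_nonempty _ (isOpen_cylS m u) ⟨u, self_mem_cylS m u⟩).choose

lemma pick_mem_cyl (hQd : Dense Q) (m : ℕ) (u : ℕ → Bool) : pick hQd m u ∈ cylS m u :=
  (hQd.inter_open_nonempty _ (isOpen_cylS m u) ⟨u, self_mem_cylS m u⟩).choose_spec.1

lemma pick_mem_Q (hQd : Dense Q) (m : ℕ) (u : ℕ → Bool) : pick hQd m u ∈ Q :=
  (hQd.inter_open_nonempty _ (isOpen_cylS m u) ⟨u, self_mem_cylS m u⟩).choose_spec.2

/-- The (length, pattern) data of the cylinder at each node. -/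
noncomputable def nodeDat (hQd : Dense Q) : List ℕ → ℕ × (ℕ → Bool)
  | [] => (0, fun _ => false)
  | n :: s =>
      ((nodeDat hQd s).1 + n + 1,
        Function.update (pick hQd (nodeDat hQd s).1 (nodeDat hQd s).2) ((nodeDat hQd s).1 + n)
          (! (pick hQd (nodeDat hQd s).1 (nodeDat hQd s).2) ((nodeDat hQd s).1 + n)))

/-- The cylinder at a node. -/
noncomputable def cyl (hQd : Dense Q) (s : List ℕ) : Set (ℕ → Bool) :=
  cylS (nodeDat hQd s).1 (nodeDat hQd s).2

/-- The chosen `Q`-point at a node. -/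
noncomputable def nq (hQd : Dense Q) (s : List ℕ) : ℕ → Bool :=
  pick hQd (nodeDat hQd s).1 (nodeDat hQd s).2

lemma nq_mem_Q (hQd : Dense Q) (s : List ℕ) : nq hQd s ∈ Q := pick_mem_Q hQd _ _

lemma nq_mem_cyl (hQd : Dense Q) (s : List ℕ) : nq hQd s ∈ cyl hQd s := pick_mem_cyl hQd _ _

lemma cyl_nil (hQd : Dense Q) : cyl hQd [] = Set.univ := by
  ext x; simp [cyl, cylS, nodeDat]

lemma nodeDat_cons (hQd : Dense Q) (n : ℕ) (s : List ℕ) :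
    nodeDat hQd (n :: s) =
      ((nodeDat hQd s).1 + n + 1,
        Function.update (nq hQd s) ((nodeDat hQd s).1 + n)
          (! nq hQd s ((nodeDat hQd s).1 + n))) := by
  rw [nodeDat, nq]

lemma mem_cyl_cons (hQd : Dense Q) {x : ℕ → Bool} (n : ℕ) (s : List ℕ) :
    x ∈ cyl hQd (n :: s) ↔
      (∀ i < (nodeDat hQd s).1 + n, x i = nq hQd s i) ∧
        x ((nodeDat hQd s).1 + n) = ! nq hQd s ((nodeDat hQd s).1 + n) := by
  rw [cyl, nodeDat_cons]
  dsimp only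
  constructor
  · intro hx
    constructor
    · intro i hi
      have := hx i (by omega)
      rwa [Function.update_of_ne (by omega)] at this
    · have := hx ((nodeDat hQd s).1 + n) (by omega)
      rwa [Function.update_self] at this
  · rintro ⟨h1, h2⟩ i hi
    rcases Nat.lt_succ_iff_lt_or_eq.mp hi with hlt | heq
    · rw [Function.update_of_ne (by omega)]
      exact h1 i hlt
    · subst heq
      rwa [Function.update_self]

lemma cyl_cons_subset (hQd : Dense Q) (n : ℕ) (s : List ℕ) :
    cyl hQd (n :: s) ⊆ cyl hQd s := by
  intro x hx
  rw [mem_cyl_cons] at hx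
  intro i hi
  rw [hx.1 i (by omega)]
  exact nq_mem_cyl hQd s i hi

lemma bool_ne_imp {a b : Bool} (h : a ≠ b) : a = !b := by
  revert h; cases a <;> cases b <;> decide

lemma nq_notMem_cons (hQd : Dense Q) (n : ℕ) (s : List ℕ) :
    nq hQd s ∉ cyl hQd (n :: s) := by
  rw [mem_cyl_cons]
  rintro ⟨-, h2⟩
  exact absurd h2 (by cases h : nq hQd s ((nodeDat hQd s).1 + n) <;> simp [h])

lemma cyl_cons_cover (hQd : Dense Q) {x : ℕ → Bool} {s : List ℕ}
    (hx : x ∈ cyl hQd s) (hne : x ≠ nq hQd s) : ∃ n, x ∈ cyl hQd (n :: s) := by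
  have hex : ∃ i, x i ≠ nq hQd s i := by
    by_contra hc
    push_neg at hc
    exact hne (funext hc)
  set N := Nat.find hex with hN
  have hspec : x N ≠ nq hQd s N := Nat.find_spec hex
  have hmin : ∀ i < N, x i = nq hQd s i := by
    intro i hi
    have := Nat.find_min hex hi
    exact not_not.mp this
  have hNm : (nodeDat hQd s).1 ≤ N := by
    by_contra hc
    push_neg at hc
    exact hspec ((hx N hc).trans (nq_mem_cyl hQd s N hc).symm)
  refine ⟨N - (nodeDat hQd s).1, ?_⟩
  rw [mem_cyl_cons]
  have hNe : (nodeDat hQd s).1 + (N - (nodeDat hQd s).1) = N := by omega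
  rw [hNe]
  exact ⟨hmin, bool_ne_imp hspec⟩

lemma cyl_sib_disjoint (hQd : Dense Q) {n k : ℕ} (hnk : n ≠ k) (s : List ℕ) :
    Disjoint (cyl hQd (n :: s)) (cyl hQd (k :: s)) := by
  rw [Set.disjoint_left]
  intro x hxn hxk
  rw [mem_cyl_cons] at hxn hxk
  rcases lt_or_gt_of_ne hnk with h | h
  · have h1 := hxk.1 ((nodeDat hQd s).1 + n) (by omega)
    rw [hxn.2] at h1
    exact absurd h1 (by cases hb : nq hQd s ((nodeDat hQd s).1 + n) <;> simp [hb])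
  · have h1 := hxn.1 ((nodeDat hQd s).1 + k) (by omega)
    rw [hxk.2] at h1
    exact absurd h1 (by cases hb : nq hQd s ((nodeDat hQd s).1 + k) <;> simp [hb])

lemma cyl_disjoint (hQd : Dense Q) : ∀ (s t : List ℕ), s.length = t.length → s ≠ t →
    Disjoint (cyl hQd s) (cyl hQd t)
  | [], [], _, hne => absurd rfl hne
  | [], _ :: _, hlen, _ => by simp at hlen
  | _ :: _, [], hlen, _ => by simp at hlen
  | n :: s', k :: t', hlen, hne => by
      by_cases hst : s' = t'
      · subst hst
        exact cyl_sib_disjoint hQd (fun hc => hne (by rw [hc])) s'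
      · have hlen' : s'.length = t'.length := by simpa using hlen
        exact (cyl_disjoint hQd s' t' hlen' hst).mono
          (cyl_cons_subset hQd n s') (cyl_cons_subset hQd k t')

lemma nlen_ge (hQd : Dense Q) : ∀ s : List ℕ, s.length ≤ (nodeDat hQd s).1
  | [] => le_refl 0
  | n :: s => by
      rw [nodeDat_cons]
      have := nlen_ge hQd s
      simp only [List.length_cons]
      omega

/-- The branch of a point `x ∉ Q` through the tree. -/
noncomputable def branch (hQd : Dense Q) (x : ℕ → Bool) (hx : x ∉ Q) :
    (d : ℕ) → {s : List ℕ // x ∈ cyl hQd s ∧ s.length = d}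
  | 0 => ⟨[], by rw [cyl_nil]; trivial, rfl⟩
  | d + 1 =>
      let p := branch hQd x hx d
      let h := cyl_cons_cover hQd p.2.1
        (fun hc => hx (by rw [hc]; exact nq_mem_Q hQd p.1))
      ⟨h.choose :: p.1, h.choose_spec, by simp [p.2.2]⟩

lemma branch_succ (hQd : Dense Q) (x : ℕ → Bool) (hx : x ∉ Q) (d : ℕ) :
    ∃ n, (branch hQd x hx (d + 1)).1 = n :: (branch hQd x hx d).1 := ⟨_, rfl⟩

lemma branch_ne_nil (hQd : Dense Q) (x : ℕ → Bool) (hx : x ∉ Q) (d : ℕ) :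
    (branch hQd x hx (d + 1)).1 ≠ [] := by
  obtain ⟨n, hn⟩ := branch_succ hQd x hx d
  rw [hn]
  simp

lemma branch_eq_of_mem (hQd : Dense Q) {x y : ℕ → Bool} (hx : x ∉ Q) (hy : y ∉ Q)
    {d : ℕ} (h : y ∈ cyl hQd (branch hQd x hx d).1) :
    (branch hQd y hy d).1 = (branch hQd x hx d).1 := by
  by_contra hne
  have hdisj := cyl_disjoint hQd _ _
    ((branch hQd y hy d).2.2.trans (branch hQd x hx d).2.2.symm) hne
  exact Set.disjoint_left.mp hdisj (branch hQd y hy d).2.1 h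

/-- A point of any node's cylinder, with branch passing through it. -/
lemma branch_eq_of_mem' (hQd : Dense Q) {y : ℕ → Bool} (hy : y ∉ Q)
    {s : List ℕ} {d : ℕ} (hlen : s.length = d) (h : y ∈ cyl hQd s) :
    (branch hQd y hy d).1 = s := by
  by_contra hne
  have hdisj := cyl_disjoint hQd _ _ ((branch hQd y hy d).2.2.trans hlen.symm) hne
  exact Set.disjoint_left.mp hdisj (branch hQd y hy d).2.1 h

end Stmt15
namespace Stmt15

variable {Q : Set (ℕ → Bool)}

noncomputable def phiA (hQd : Dense Q) (x : ℕ → Bool) (hx : x ∉ Q) (d : ℕ) : ℝ :=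
  (ivl (branch hQd x hx (d + 1)).1).1

noncomputable def phiB (hQd : Dense Q) (x : ℕ → Bool) (hx : x ∉ Q) (d : ℕ) : ℝ :=
  (ivl (branch hQd x hx (d + 1)).1).2

lemma phiA_lt_phiB (hQd : Dense Q) (x : ℕ → Bool) (hx : x ∉ Q) (d : ℕ) :
    phiA hQd x hx d < phiB hQd x hx d :=
  ivl_lt _ (branch_ne_nil hQd x hx d)

lemma phi_step (hQd : Dense Q) (x : ℕ → Bool) (hx : x ∉ Q) (d : ℕ) :
    phiA hQd x hx d < phiA hQd x hx (d + 1) ∧ phiB hQd x hx (d + 1) < phiB hQd x hx d := by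
  obtain ⟨n, hn⟩ := branch_succ hQd x hx (d + 1)
  obtain ⟨m, hm⟩ := branch_succ hQd x hx d
  rw [phiA, phiA, phiB, phiB, hn, hm]
  exact ⟨(ivl_nested n m _).1, (ivl_nested n m _).2⟩

lemma phiA_mono (hQd : Dense Q) (x : ℕ → Bool) (hx : x ∉ Q) : StrictMono (phiA hQd x hx) :=
  strictMono_nat_of_lt_succ (fun d => (phi_step hQd x hx d).1)

lemma phiA_lt_phiB' (hQd : Dense Q) (x : ℕ → Bool) (hx : x ∉ Q) (d e : ℕ) :
    phiA hQd x hx d < phiB hQd x hx e := by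
  have hanti : ∀ k l : ℕ, k ≤ l → phiB hQd x hx l ≤ phiB hQd x hx k :=
    fun k l h => antitone_nat_of_succ_le (fun i => (phi_step hQd x hx i).2.le) h
  rcases le_total d e with h | h
  · exact lt_of_le_of_lt ((phiA_mono hQd x hx).monotone h) (phiA_lt_phiB hQd x hx e)
  · exact lt_of_lt_of_le (phiA_lt_phiB hQd x hx d) (hanti e d h)

noncomputable def phi (hQd : Dense Q) (x : ℕ → Bool) (hx : x ∉ Q) : ℝ :=
  ⨆ d, phiA hQd x hx d

lemma phi_bdd (hQd : Dense Q) (x : ℕ → Bool) (hx : x ∉ Q) :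
    BddAbove (Set.range (phiA hQd x hx)) := by
  refine ⟨phiB hQd x hx 0, ?_⟩
  rintro _ ⟨d, rfl⟩
  exact (phiA_lt_phiB' hQd x hx d 0).le

lemma phi_mem (hQd : Dense Q) (x : ℕ → Bool) (hx : x ∉ Q) (d : ℕ) :
    phi hQd x hx ∈ Ioo (ivl (branch hQd x hx (d + 1)).1).1 (ivl (branch hQd x hx (d + 1)).1).2 := by
  constructor
  · have h1 : phiA hQd x hx (d + 1) ≤ phi hQd x hx := le_ciSup (phi_bdd hQd x hx) (d + 1)
    exact lt_of_lt_of_le (phi_step hQd x hx d).1 h1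
  · have h2 : phi hQd x hx ≤ phiB hQd x hx (d + 1) :=
      ciSup_le (fun e => (phiA_lt_phiB' hQd x hx e (d + 1)).le)
    exact lt_of_le_of_lt h2 (phi_step hQd x hx d).2

lemma phi_irrational (hQd : Dense Q) (x : ℕ → Bool) (hx : x ∉ Q) :
    Irrational (phi hQd x hx) := by
  rintro ⟨q, hq⟩
  obtain ⟨dq, hdq⟩ := rq_surj q
  obtain ⟨n, hn⟩ := branch_succ hQd x hx dq
  have havoid := ivl_avoid n (branch hQd x hx dq).1
  rw [(branch hQd x hx dq).2.2, ← hn, hdq, hq] at havoid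
  exact havoid (phi_mem hQd x hx dq)

lemma mem_iff_phi_mem (hQd : Dense Q) {x y : ℕ → Bool} (hx : x ∉ Q) (hy : y ∉ Q) (d : ℕ) :
    y ∈ cyl hQd (branch hQd x hx (d + 1)).1 ↔
      phi hQd y hy ∈
        Ioo (ivl (branch hQd x hx (d + 1)).1).1 (ivl (branch hQd x hx (d + 1)).1).2 := by
  constructor
  · intro h
    have heq := branch_eq_of_mem hQd hx hy h
    have hm := phi_mem hQd y hy d
    rwa [heq] at hm
  · intro h
    have hm := phi_mem hQd y hy d
    by_cases heq : (branch hQd y hy (d + 1)).1 = (branch hQd x hx (d + 1)).1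
    · have := (branch hQd y hy (d + 1)).2.1
      rwa [heq] at this
    · have hdisj := ivl_disjoint (branch hQd y hy (d + 1)).1 (branch hQd x hx (d + 1)).1
        ((branch hQd y hy (d + 1)).2.2.trans (branch hQd x hx (d + 1)).2.2.symm)
        (branch_ne_nil hQd y hy d) heq
      exact absurd h (Set.disjoint_left.mp hdisj hm)

lemma phi_inj (hQd : Dense Q) {x y : ℕ → Bool} (hx : x ∉ Q) (hy : y ∉ Q) (hne : x ≠ y) :
    phi hQd x hx ≠ phi hQd y hy := by
  have hex : ∃ d, y ∉ cyl hQd (branch hQd x hx (d + 1)).1 := by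
    by_contra hc
    push_neg at hc
    apply hne
    funext i
    have hyc := hc i
    have hxc := (branch hQd x hx (i + 1)).2.1
    have hlen : i < (nodeDat hQd (branch hQd x hx (i + 1)).1).1 :=
      lt_of_lt_of_le (by rw [(branch hQd x hx (i + 1)).2.2]; omega) (nlen_ge hQd _)
    exact (hxc i hlen).trans (hyc i hlen).symm
  obtain ⟨d, hd⟩ := hex
  intro hphi
  apply hd
  rw [mem_iff_phi_mem hQd hx hy d, ← hphi]
  exact phi_mem hQd x hx d

lemma phi_dist (hQd : Dense Q) {x y : ℕ → Bool} (hx : x ∉ Q) (hy : y ∉ Q) {d : ℕ}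
    (h : y ∈ cyl hQd (branch hQd x hx (d + 1)).1) :
    |phi hQd x hx - phi hQd y hy| < (1 / 2) ^ (d + 1) := by
  have h1 := phi_mem hQd x hx d
  have h2 := (mem_iff_phi_mem hQd hx hy d).mp h
  have hw := ivl_width (branch hQd x hx (d + 1)).1 (branch_ne_nil hQd x hx d)
  rw [(branch hQd x hx (d + 1)).2.2] at hw
  rw [abs_lt]
  constructor
  · linarith [h1.1, h1.2, h2.1, h2.2]
  · linarith [h1.1, h1.2, h2.1, h2.2]

lemma cylS_basis {x : ℕ → Bool} {u : Set (ℕ → Bool)} (hu : u ∈ nhds x) :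
    ∃ M, cylS M x ⊆ u := by
  rw [nhds_pi, Filter.mem_pi] at hu
  obtain ⟨I, hIf, V, hV, hVs⟩ := hu
  obtain ⟨M, hM⟩ := hIf.bddAbove
  refine ⟨M + 1, fun y hy => hVs (fun i hi => ?_)⟩
  rw [hy i (lt_of_le_of_lt (hM hi) (lt_add_one M))]
  exact mem_of_mem_nhds (hV i)

lemma cyl_branch_subset_cylS (hQd : Dense Q) (x : ℕ → Bool) (hx : x ∉ Q) (M : ℕ) :
    cyl hQd (branch hQd x hx (M + 1)).1 ⊆ cylS M x := by
  intro y hy i hi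
  have hlen : i < (nodeDat hQd (branch hQd x hx (M + 1)).1).1 :=
    lt_of_lt_of_le (by rw [(branch hQd x hx (M + 1)).2.2]; omega) (nlen_ge hQd _)
  exact (hy i hlen).trans ((branch hQd x hx (M + 1)).2.1 i hlen).symm

theorem core (hQc : Q.Countable) (hQd : Dense Q) :
    ∃ φ : ↥(Qᶜ) → ℝ, Topology.IsEmbedding φ ∧ (∀ p, Irrational (φ p)) ∧
      Dense (Set.range φ) := by
  classical
  have hcont : Continuous (fun p : ↥(Qᶜ) => phi hQd p.1 p.2) := by
    rw [continuous_iff_continuousAt]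
    intro p
    rw [ContinuousAt, Metric.tendsto_nhds]
    intro ε hε
    obtain ⟨dn, hd⟩ := exists_pow_lt_of_lt_one hε (by norm_num : (1:ℝ)/2 < 1)
    have hsub : {y : ↥(Qᶜ) | y.1 ∈ cyl hQd (branch hQd p.1 p.2 (dn + 1)).1} ∈ nhds p := by
      rw [mem_nhds_subtype]
      exact ⟨cyl hQd (branch hQd p.1 p.2 (dn + 1)).1,
        (isOpen_cylS _ _).mem_nhds (branch hQd p.1 p.2 (dn + 1)).2.1, fun y hy => hy⟩
    filter_upwards [hsub] with y hy
    rw [Real.dist_eq]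
    have hdist := phi_dist hQd p.2 y.2 hy
    rw [abs_sub_comm] at hdist
    have hle : ((1:ℝ)/2) ^ (dn + 1) ≤ (1/2) ^ dn :=
      pow_le_pow_of_le_one (by norm_num) (by norm_num) (by omega)
    linarith
  refine ⟨fun p => phi hQd p.1 p.2, ⟨isInducing_iff_nhds.mpr (fun p => le_antisymm
    (hcont.continuousAt (x := p)).le_comap ?_), ?_⟩, fun p => phi_irrational hQd p.1 p.2, ?_⟩
  · -- comap ≤ 𝓝 p
    intro U hU
    rw [mem_nhds_subtype] at hU
    obtain ⟨u, hu, husub⟩ := hU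
    obtain ⟨M, hM⟩ := cylS_basis hu
    rw [Filter.mem_comap]
    refine ⟨Ioo (ivl (branch hQd p.1 p.2 (M + 1)).1).1 (ivl (branch hQd p.1 p.2 (M + 1)).1).2,
      isOpen_Ioo.mem_nhds (phi_mem hQd p.1 p.2 M), ?_⟩
    intro y hy
    have : y.1 ∈ cyl hQd (branch hQd p.1 p.2 (M + 1)).1 :=
      (mem_iff_phi_mem hQd p.2 y.2 M).mpr hy
    exact husub (hM (cyl_branch_subset_cylS hQd p.1 p.2 M this))
  · -- injective
    intro p q h
    by_contra hc
    exact phi_inj hQd p.2 q.2 (fun he => hc (Subtype.ext he)) h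
  · -- dense range
    rw [Metric.dense_iff]
    intro z ε hε
    obtain ⟨dn, hd⟩ := exists_pow_lt_of_lt_one (half_pos hε) (by norm_num : (1:ℝ)/2 < 1)
    have hdense := ivl_dense dn
    rw [Metric.dense_iff] at hdense
    obtain ⟨p', hp'mem⟩ := hdense z (ε/2) (half_pos hε)
    obtain ⟨hp'ball, hp'U⟩ := hp'mem
    simp only [mem_iUnion] at hp'U
    obtain ⟨s, hslen, hp's⟩ := hp'U
    have hsne : s ≠ [] := by intro hc; rw [hc] at hslen; simp at hslen
    obtain ⟨y, hycyl, hyQ⟩ := cylS_diff_nonempty hQc (nodeDat hQd s).1 (nodeDat hQd s).2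
    have hbr : (branch hQd y hyQ (dn + 1)).1 = s := branch_eq_of_mem' hQd hyQ hslen hycyl
    refine ⟨phi hQd y hyQ, ?_, ⟨y, hyQ⟩, rfl⟩
    have hmem := phi_mem hQd y hyQ dn
    rw [hbr] at hmem
    have hw := ivl_width s hsne
    rw [hslen] at hw
    rw [Metric.mem_ball, Real.dist_eq, abs_lt]
    rw [Metric.mem_ball, Real.dist_eq, abs_lt] at hp'ball
    have hle : ((1:ℝ)/2) ^ (dn + 1) ≤ (1/2) ^ dn :=
      pow_le_pow_of_le_one (by norm_num) (by norm_num) (by omega)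
    constructor
    · linarith [hmem.1, hmem.2, hp's.1, hp's.2, hp'ball.1, hp'ball.2]
    · linarith [hmem.1, hmem.2, hp's.1, hp's.2, hp'ball.1, hp'ball.2]

end Stmt15
namespace Stmt15

open Topology

/-! ### Product of embeddings -/

lemma isInducing_piMap {ι : Type*} {X Y : ι → Type*} [∀ i, TopologicalSpace (X i)]
    [∀ i, TopologicalSpace (Y i)] {f : ∀ i, X i → Y i} (hf : ∀ i, IsInducing (f i)) :
    IsInducing (fun (x : ∀ i, X i) (i : ι) => f i (x i)) := by
  constructor
  rw [Pi.topologicalSpace, Pi.topologicalSpace, induced_iInf]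
  refine iInf_congr (fun i => ?_)
  rw [(hf i).eq_induced, induced_compose, induced_compose]
  rfl

lemma isEmbedding_piMap {ι : Type*} {X Y : ι → Type*} [∀ i, TopologicalSpace (X i)]
    [∀ i, TopologicalSpace (Y i)] {f : ∀ i, X i → Y i} (hf : ∀ i, IsEmbedding (f i)) :
    IsEmbedding (fun (x : ∀ i, X i) (i : ι) => f i (x i)) := by
  refine ⟨isInducing_piMap (fun i => (hf i).toIsInducing), ?_⟩
  intro a b h
  funext i
  exact (hf i).injective (congrFun h i)

lemma rangePiMap {ι : Type*} {X Y : ι → Type*} {f : ∀ i, X i → Y i} :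
    Set.range (fun (x : ∀ i, X i) (i : ι) => f i (x i)) =
      Set.pi Set.univ (fun i => Set.range (f i)) := by
  ext y
  constructor
  · rintro ⟨x, rfl⟩ i _
    exact ⟨x i, rfl⟩
  · intro hy
    choose x hx using fun i => hy i (Set.mem_univ i)
    exact ⟨x, funext hx⟩

/-! ### Misc helpers -/

lemma exists_countable_dense_subset'' {α : Type*} [TopologicalSpace α]
    [SecondCountableTopology α] {D : Set α} (hD : Dense D) :
    ∃ C ⊆ D, C.Countable ∧ Dense C := by
  obtain ⟨E, hEc, hEd⟩ := TopologicalSpace.exists_countable_dense ↥D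
  refine ⟨Subtype.val '' E, by rintro _ ⟨e, _, rfl⟩; exact e.2, hEc.image _, ?_⟩
  have h1 : D ⊆ closure (Subtype.val '' E) := Subtype.dense_iff.mp hEd
  exact Dense.of_closure (hD.mono h1)

def homeoSubsetSubtype {α : Type*} [TopologicalSpace α] {s t : Set α} (h : s ⊆ t) :
    ↥(Subtype.val ⁻¹' s : Set ↥t) ≃ₜ ↥s where
  toFun x := ⟨x.1.1, x.2⟩
  invFun y := ⟨⟨y.1, h y.2⟩, y.2⟩
  left_inv x := rfl
  right_inv y := rfl
  continuous_toFun := Continuous.subtype_mk (continuous_subtype_val.comp continuous_subtype_val) _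
  continuous_invFun := Continuous.subtype_mk (Continuous.subtype_mk continuous_subtype_val _) _

noncomputable def isEmbeddingImageHomeo {α β : Type*} [TopologicalSpace α] [TopologicalSpace β]
    {f : α → β} (hf : IsEmbedding f) (s : Set α) : ↥s ≃ₜ ↥(f '' s) :=
  (IsEmbedding.toHomeomorph (f := s.restrict f)
    (hf.comp IsEmbedding.subtypeVal)).trans
    (Homeomorph.setCongr (Set.range_restrict f s))

/-! ### An embedding of `ℝ` onto `(0,1)` -/

def sigm (x : ℝ) : ℝ := (x / (1 + |x|) + 1) / 2

lemma sigm_bounds (x : ℝ) : -1 < x / (1 + |x|) ∧ x / (1 + |x|) < 1 := by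
  have h1 : (0:ℝ) < 1 + |x| := by positivity
  have h2 : -(1 + |x|) < x := lt_of_lt_of_le (by linarith [abs_nonneg x]) (neg_abs_le x)
  have h3 : x < 1 + |x| := lt_of_le_of_lt (le_abs_self x) (by linarith)
  constructor
  · rw [lt_div_iff₀ h1]; linarith
  · exact (div_lt_one h1).mpr h3

lemma sigm_mem (x : ℝ) : sigm x ∈ Ioo (0:ℝ) 1 := by
  obtain ⟨h1, h2⟩ := sigm_bounds x
  rw [sigm]
  constructor <;> [linarith; linarith]

lemma continuous_sigm : Continuous sigm := by
  have : Continuous fun x : ℝ => x / (1 + |x|) :=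
    continuous_id.div (continuous_const.add continuous_abs) (fun x => by positivity)
  exact (this.add continuous_const).div_const 2

noncomputable def homeoRealIoo : ℝ ≃ₜ ↥(Ioo (0:ℝ) 1) where
  toFun x := ⟨sigm x, sigm_mem x⟩
  invFun y := (2 * y.1 - 1) / (1 - |2 * y.1 - 1|)
  left_inv x := by
    have h1 : (0:ℝ) < 1 + |x| := by positivity
    show (2 * sigm x - 1) / (1 - |2 * sigm x - 1|) = x
    have hu : 2 * sigm x - 1 = x / (1 + |x|) := by rw [sigm]; ring
    rw [hu, abs_div, abs_of_pos h1]
    have hden : 1 - |x| / (1 + |x|) = 1 / (1 + |x|) := by field_simp; ring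
    rw [hden]
    have h1' : 1 + |x| ≠ 0 := ne_of_gt h1
    field_simp
  right_inv y := by
    apply Subtype.ext
    obtain ⟨hy1, hy2⟩ := y.2
    have hu1 : -1 < 2 * y.1 - 1 := by linarith
    have hu2 : 2 * y.1 - 1 < 1 := by linarith
    have habs : |2 * y.1 - 1| < 1 := abs_lt.mpr ⟨hu1, hu2⟩
    have hden : (0:ℝ) < 1 - |2 * y.1 - 1| := by linarith
    show sigm ((2 * y.1 - 1) / (1 - |2 * y.1 - 1|)) = y.1
    have hxabs : |(2 * y.1 - 1) / (1 - |2 * y.1 - 1|)| = |2 * y.1 - 1| / (1 - |2 * y.1 - 1|) := by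
      rw [abs_div, abs_of_pos hden]
    have h1p : 1 + |(2 * y.1 - 1) / (1 - |2 * y.1 - 1|)| = 1 / (1 - |2 * y.1 - 1|) := by
      rw [hxabs]; field_simp; ring
    rw [sigm, h1p]
    have hsimp : (2 * y.1 - 1) / (1 - |2 * y.1 - 1|) / (1 / (1 - |2 * y.1 - 1|)) = 2 * y.1 - 1 := by
      field_simp
    rw [hsimp]
    ring
  continuous_toFun := Continuous.subtype_mk continuous_sigm _
  continuous_invFun := by
    have hv : Continuous fun y : ↥(Ioo (0:ℝ) 1) => (y : ℝ) := continuous_subtype_val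
    refine Continuous.div (by fun_prop) (by fun_prop) ?_
    intro y
    obtain ⟨hy1, hy2⟩ := y.2
    have : |2 * (y:ℝ) - 1| < 1 := abs_lt.mpr ⟨by linarith, by linarith⟩
    intro hc
    rw [sub_eq_zero] at hc
    rw [← hc] at this
    exact lt_irrefl _ this

/-! ### The embedding of the irrationals into `[0,1]` -/

noncomputable def jmap : {r : ℝ // Irrational r} → ↥(Set.Icc (0:ℝ) 1) :=
  Set.codRestrict (fun r => sigm r.1) (Set.Icc 0 1)
    (fun r => Ioo_subset_Icc_self (sigm_mem r.1))

lemma jmap_isEmbedding : IsEmbedding jmap := by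
  apply IsEmbedding.codRestrict
  have h1 : IsEmbedding sigm := by
    have : sigm = Subtype.val ∘ (homeoRealIoo : ℝ → ↥(Ioo (0:ℝ) 1)) := rfl
    rw [this]
    exact IsEmbedding.subtypeVal.comp homeoRealIoo.isEmbedding
  exact h1.comp IsEmbedding.subtypeVal

lemma jmap_denseRange : DenseRange jmap := by
  intro z
  rw [closure_subtype]
  have him : Subtype.val '' Set.range jmap = sigm '' {r : ℝ | Irrational r} := by
    rw [← Set.range_comp]
    have h0 : (Subtype.val ∘ jmap) =
        sigm ∘ (Subtype.val : {r : ℝ // Irrational r} → ℝ) := rfl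
    rw [h0, Set.range_comp, Subtype.range_coe_subtype]
  rw [him]
  -- `Icc 0 1 ⊆ closure (sigm '' irrationals)`
  have hIoo : Ioo (0:ℝ) 1 ⊆ closure (sigm '' {r : ℝ | Irrational r}) := by
    intro w hw
    have hd : Dense (homeoRealIoo '' {r : ℝ | Irrational r}) :=
      homeoRealIoo.surjective.denseRange.dense_image homeoRealIoo.continuous dense_irrational
    have hmem : (⟨w, hw⟩ : ↥(Ioo (0:ℝ) 1)) ∈ closure (homeoRealIoo '' {r : ℝ | Irrational r}) :=
      hd _
    rw [closure_subtype] at hmem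
    have him2 : Subtype.val '' (homeoRealIoo '' {r : ℝ | Irrational r}) =
        sigm '' {r : ℝ | Irrational r} := by
      rw [Set.image_image]
      rfl
    rwa [him2] at hmem
  have h2 : Set.Icc (0:ℝ) 1 ⊆ closure (sigm '' {r : ℝ | Irrational r}) := by
    rw [← closure_Ioo (by norm_num : (0:ℝ) ≠ 1)]
    have := closure_mono hIoo
    rwa [closure_closure] at this
  exact h2 z.2

end Stmt15
namespace Stmt15

open Topology

lemma fiber_embedding {F : Type} (e : F ≃ ℕ) {D : Set (F → Bool)} (hD : Dense D) :
    ∃ X : Set (F → Bool), Dᶜ ⊆ X ∧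
      ∃ f : ↥X → {r : ℝ // Irrational r}, IsEmbedding f ∧ DenseRange f := by
  classical
  haveI : Countable F := Countable.of_equiv ℕ e.symm
  obtain ⟨Qf, hQfD, hQfc, hQfd⟩ := exists_countable_dense_subset'' hD
  refine ⟨Qfᶜ, compl_subset_compl.mpr hQfD, ?_⟩
  set H : (F → Bool) ≃ₜ (ℕ → Bool) := Homeomorph.piCongrLeft (Y := fun _ : ℕ => Bool) e
    with hH
  set Q' : Set (ℕ → Bool) := H '' Qf with hQ'
  have hQ'c : Q'.Countable := hQfc.image _
  have hQ'd : Dense Q' := H.surjective.denseRange.dense_image H.continuous hQfd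
  obtain ⟨φ, hφe, hφi, hφd⟩ := core hQ'c hQ'd
  have himg : H '' Qfᶜ = Q'ᶜ := by rw [hQ', Set.image_compl_eq H.bijective]
  set g : ↥(Qfᶜ) ≃ₜ ↥(Q'ᶜ) := (H.image Qfᶜ).trans (Homeomorph.setCongr himg) with hg
  set f0 : ↥(Qfᶜ) → ℝ := φ ∘ g with hf0
  have hf0e : IsEmbedding f0 := hφe.comp g.isEmbedding
  have hf0i : ∀ p, Irrational (f0 p) := fun p => hφi (g p)
  have hf0d : Dense (Set.range f0) := by
    have hr : Set.range f0 = Set.range φ := by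
      rw [hf0, Set.range_comp, g.surjective.range_eq, Set.image_univ]
    rwa [hr]
  refine ⟨Set.codRestrict f0 {r : ℝ | Irrational r} hf0i, hf0e.codRestrict _ _, ?_⟩
  intro z
  rw [closure_subtype]
  have hsub : Set.range f0 ⊆
      Subtype.val '' Set.range (Set.codRestrict f0 {r : ℝ | Irrational r} hf0i) := by
    rintro _ ⟨p, rfl⟩
    exact ⟨_, ⟨p, rfl⟩, rfl⟩
  exact closure_mono hsub (hf0d _)

end Stmt15


end

open Stmt15 Topology in
/-- If `S` is a dense subset of the Cantor cube `D(2)^κ` and there is a partition of the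
index set into countably infinite pieces on each of which the restriction of `S` is
co-dense, then `S` is homeomorphic to a dense subspace of the irrational cube `P^κ`, and
hence to a dense subspace of the Tychonov cube `[0,1]^κ`. -/
theorem stmt_15 (κ : Cardinal.{0}) (hκ : ℵ₀ ≤ κ) (K : Type) (hK : #K = κ)
    (S : Set (K → Bool)) (hS : Dense S)
    (N : Type) (hN : #N = κ) (π : K → N)
    (hfib : ∀ ν : N, #↥(π ⁻¹' {ν}) = ℵ₀)
    (hcodense : ∀ ν : N,
      Dense (((fun x : K → Bool => fun i : π ⁻¹' {ν} => x i.1) '' S)ᶜ)) :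
    (∃ T : Set (K → {r : ℝ // Irrational r}), Dense T ∧ Nonempty (↥S ≃ₜ ↥T)) ∧
    (∃ T : Set (K → ↥(Set.Icc (0 : ℝ) 1)), Dense T ∧ Nonempty (↥S ≃ₜ ↥T)) := by
  classical
  have hEquiv : ∀ ν : N, Nonempty (↥(π ⁻¹' {ν}) ≃ ℕ) := fun ν =>
    Cardinal.eq.mp ((hfib ν).trans Cardinal.mk_nat.symm)
  have hstep : ∀ ν : N, ∃ X : Set (↥(π ⁻¹' {ν}) → Bool),
      (((fun x : K → Bool => fun i : π ⁻¹' {ν} => x i.1) '' S)ᶜ)ᶜ ⊆ X ∧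
      ∃ f : ↥X → {r : ℝ // Irrational r}, IsEmbedding f ∧ DenseRange f :=
    fun ν => fiber_embedding (hEquiv ν).some (hcodense ν)
  choose X hXsub fexist using hstep
  choose f hfe hfd using fexist
  have hXS : ∀ ν, ((fun x : K → Bool => fun i : π ⁻¹' {ν} => x i.1) '' S) ⊆ X ν := by
    intro ν y hy
    exact hXsub ν (by rwa [compl_compl])
  -- the global homeomorphism regrouping coordinates
  set Heq : (K → Bool) ≃ (∀ ν : N, (↥(π ⁻¹' {ν}) → Bool)) :=
    { toFun := fun x ν i => x i.1
      invFun := fun y k => y (π k) ⟨k, rfl⟩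
      left_inv := fun x => rfl
      right_inv := fun y => by
        funext ν i
        obtain ⟨i, hi⟩ := i
        simp only [Set.mem_preimage, Set.mem_singleton_iff] at hi
        subst hi
        rfl } with hHeq
  set H : (K → Bool) ≃ₜ (∀ ν : N, (↥(π ⁻¹' {ν}) → Bool)) :=
    { toEquiv := Heq
      continuous_toFun := continuous_pi (fun ν => continuous_pi (fun i => continuous_apply i.1))
      continuous_invFun := by
        refine continuous_pi (fun k => ?_)
        exact (continuous_apply (⟨k, rfl⟩ : ↥(π ⁻¹' {π k}))).comp
          (continuous_apply (π k)) } with hH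
  set Xp : Set (∀ ν : N, (↥(π ⁻¹' {ν}) → Bool)) := Set.pi Set.univ X with hXp
  set W : Set (K → Bool) := H ⁻¹' Xp with hW
  have hSW : S ⊆ W := fun x hx ν _ => hXS ν ⟨x, hx, rfl⟩
  set homeo1 : ↥W ≃ₜ ↥Xp :=
    (H.image W).trans (Homeomorph.setCongr (Set.image_preimage_eq Xp H.surjective)) with hh1
  have hjinc : IsEmbedding (fun (a : ∀ ν, ↥(X ν)) (ν : N) => (a ν).1) :=
    isEmbedding_piMap (fun ν => IsEmbedding.subtypeVal)
  have hrange : Set.range (fun (a : ∀ ν, ↥(X ν)) (ν : N) => (a ν).1) = Xp := by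
    rw [rangePiMap]
    exact Set.pi_congr rfl (fun ν _ => Subtype.range_coe)
  set homeo2 : ↥Xp ≃ₜ (∀ ν, ↥(X ν)) :=
    ((IsEmbedding.toHomeomorph hjinc).trans (Homeomorph.setCongr hrange)).symm with hh2
  have hPhi : IsEmbedding (fun (a : ∀ ν, ↥(X ν)) (ν : N) => f ν (a ν)) := isEmbedding_piMap hfe
  have hPhid : DenseRange (fun (a : ∀ ν, ↥(X ν)) (ν : N) => f ν (a ν)) := by
    rw [DenseRange, rangePiMap]
    exact dense_pi Set.univ (fun ν _ => hfd ν)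
  have eNK : N ≃ K := (Cardinal.eq.mp (hN.trans hK.symm)).some
  set pcl : (∀ _ : N, {r : ℝ // Irrational r}) ≃ₜ (K → {r : ℝ // Irrational r}) :=
    Homeomorph.piCongrLeft (Y := fun _ : K => {r : ℝ // Irrational r}) eNK with hpcl
  set Emb : ↥W → (K → {r : ℝ // Irrational r}) :=
    (pcl ∘ (fun (a : ∀ ν, ↥(X ν)) (ν : N) => f ν (a ν))) ∘ (homeo2 ∘ homeo1) with hEmbdef
  have hEmb : IsEmbedding Emb :=
    (pcl.isEmbedding.comp hPhi).comp (homeo2.isEmbedding.comp homeo1.isEmbedding)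
  have hEmbd : DenseRange Emb := by
    rw [DenseRange, hEmbdef, Set.range_comp]
    have hsurj : Set.range (homeo2 ∘ homeo1) = Set.univ :=
      (homeo2.surjective.comp homeo1.surjective).range_eq
    rw [hsurj, Set.image_univ, Set.range_comp]
    exact (pcl.surjective.denseRange).dense_image pcl.continuous hPhid
  set Shat : Set ↥W := Subtype.val ⁻¹' S with hShat
  have hShatd : Dense Shat := by
    intro w
    rw [closure_subtype]
    have h1 : Subtype.val '' Shat = W ∩ S := Subtype.image_preimage_coe W S
    rw [h1, Set.inter_eq_self_of_subset_right hSW]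
    exact hS _
  set T : Set (K → {r : ℝ // Irrational r}) := Emb '' Shat with hT
  have hTd : Dense T := hEmbd.dense_image hEmb.continuous hShatd
  have hhomeoST : ↥S ≃ₜ ↥T :=
    (homeoSubsetSubtype hSW).symm.trans (isEmbeddingImageHomeo hEmb Shat)
  constructor
  · exact ⟨T, hTd, ⟨hhomeoST⟩⟩
  · set Jm : (K → {r : ℝ // Irrational r}) → (K → ↥(Set.Icc (0:ℝ) 1)) :=
      fun g k => jmap (g k) with hJm
    have hJme : IsEmbedding Jm := isEmbedding_piMap (fun _ => jmap_isEmbedding)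
    have hJmd : DenseRange Jm := by
      rw [DenseRange, hJm, rangePiMap]
      exact dense_pi Set.univ (fun k _ => jmap_denseRange)
    exact ⟨Jm '' T, hJmd.dense_image hJme.continuous hTd,
      ⟨hhomeoST.trans (isEmbeddingImageHomeo hJme T)⟩⟩
end

section
/- Every countable dense subspace of the Cantor cube D(2)^𝔠 is homeomorphic to a dense subspace of the Tychonov cube [0,1]^𝔠. -/
/-!
A bijection `C ≃ C × ℕ` identifies `D(2)^C` with `(D(2)^ℕ)^C`, and binary expansion
`Real.fromBinary : D(2)^ℕ → [0,1]` is a continuous surjection. Restricted to the sequences that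
are not eventually constant it is an embedding: such a sequence encodes a non-dyadic number, near
which every binary digit is locally constant. Since `S` is countable, a diagonal argument gives a
mask whose xor with every block of every point of `S` is not eventually constant. Masking and then
expanding blocks coordinatewise is a continuous surjection `D(2)^C → [0,1]^C` that embeds `S`,
and the image of `S` is dense because `S` is.
-/

open Cardinal Set Filter Topology

theorem Cardinal.nonempty_equiv_prod_nat {α : Type*} (h : ℵ₀ ≤ #α) : Nonempty (α ≃ α × ℕ) := by
  rw [← Cardinal.eq, mk_prod, lift_uzero, mk_nat, lift_aleph0, mul_aleph0_eq h]

theorem Filter.not_eventuallyConst_iff_frequently_eq {α : Type*} {l : Filter α} {f : α → Bool} :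
    ¬EventuallyConst f l ↔ ∀ x, ∃ᶠ a in l, f a = x := by
  simp only [eventuallyConst_iff_exists_eventuallyEq, EventuallyEq, not_exists,
    not_eventually, Bool.forall_bool, Bool.not_eq_false, Bool.not_eq_true, and_comm]

theorem Filter.eventuallyConst_atTop_comp_add_one_iff {α : Type*} {f : ℕ → α} :
    EventuallyConst (fun n ↦ f (n + 1)) atTop ↔ EventuallyConst f atTop := by
  conv_rhs => rw [EventuallyConst, ← map_add_atTop_eq_nat 1, Filter.map_map]
  rfl

theorem exists_xor_not_eventuallyConst {T : Set (ℕ → Bool)} (hT : T.Countable) :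
    ∃ m : ℕ → Bool, ∀ t ∈ T, ¬EventuallyConst (fun n ↦ xor (t n) (m n)) atTop := by
  rcases T.eq_empty_or_nonempty with rfl | hne
  · exact ⟨fun _ ↦ false, by simp⟩
  obtain ⟨σ, rfl⟩ := hT.exists_eq_range hne
  -- Bits `2 * Nat.pair j N` and `2 * Nat.pair j N + 1` of the xor with `σ j` are `false`, `true`.
  refine ⟨fun n ↦ xor (σ (n / 2).unpair.1 n) (decide (n % 2 = 1)), ?_⟩
  rintro _ ⟨j, rfl⟩
  refine not_eventuallyConst_iff_frequently_eq.2 fun x ↦ frequently_atTop.2 fun N ↦ ?_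
  have hN := Nat.right_le_pair j N
  cases x
  · refine ⟨2 * Nat.pair j N, by omega, ?_⟩
    simp
  · refine ⟨2 * Nat.pair j N + 1, by omega, ?_⟩
    have h : (2 * Nat.pair j N + 1) / 2 = Nat.pair j N := by omega
    simp [h]

namespace Real

theorem coe_fromBinary (b : ℕ → Bool) :
    (fromBinary b : ℝ) = ofDigits (fun n ↦ finTwoEquiv.symm (b n)) := rfl

theorem fromBinary_eq_half (b : ℕ → Bool) :
    (fromBinary b : ℝ) = ((b 0).toNat + fromBinary (fun n ↦ b (n + 1))) / 2 := by
  rw [coe_fromBinary, coe_fromBinary, ofDigits_eq_sum_add_ofDigits _ 1]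
  simp only [Finset.sum_range_one, ofDigitsTerm, add_comm _ 1]
  cases b 0 <;> simp [finTwoEquiv] <;> ring

theorem fromBinary_pos_of_eq_true :
    ∀ {b : ℕ → Bool} {n : ℕ}, b n = true → 0 < (fromBinary b : ℝ)
  | b, 0, h => by
    rw [fromBinary_eq_half, h]
    have := (fromBinary fun n ↦ b (n + 1)).2.1
    norm_num
    positivity
  | b, n + 1, h => by
    rw [fromBinary_eq_half]
    have := fromBinary_pos_of_eq_true (b := fun n ↦ b (n + 1)) h
    positivity

theorem fromBinary_lt_one_of_eq_false :
    ∀ {b : ℕ → Bool} {n : ℕ}, b n = false → (fromBinary b : ℝ) < 1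
  | b, 0, h => by
    rw [fromBinary_eq_half, h]
    have := (fromBinary fun n ↦ b (n + 1)).2.2
    norm_num
    linarith
  | b, n + 1, h => by
    rw [fromBinary_eq_half]
    have := fromBinary_lt_one_of_eq_false (b := fun n ↦ b (n + 1)) h
    have : ((b 0).toNat : ℝ) ≤ 1 := Nat.cast_le_one.2 (Bool.toNat_le _)
    linarith

theorem fromBinary_mem_Ioo {b : ℕ → Bool} (hb : ¬EventuallyConst b atTop) :
    (fromBinary b : ℝ) ∈ Ioo 0 1 := by
  rw [not_eventuallyConst_iff_frequently_eq] at hb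
  obtain ⟨n, hn⟩ := (hb true).exists
  obtain ⟨m, hm⟩ := (hb false).exists
  exact ⟨fromBinary_pos_of_eq_true hn, fromBinary_lt_one_of_eq_false hm⟩

theorem half_lt_fromBinary_iff {b : ℕ → Bool} (hb : ¬EventuallyConst b atTop) :
    1 / 2 < (fromBinary b : ℝ) ↔ b 0 = true := by
  obtain ⟨h0, h1⟩ := fromBinary_mem_Ioo (eventuallyConst_atTop_comp_add_one_iff.not.2 hb)
  rw [fromBinary_eq_half]
  cases b 0 <;> norm_num <;> linarith

theorem fromBinary_lt_half_iff {b : ℕ → Bool} (hb : ¬EventuallyConst b atTop) :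
    (fromBinary b : ℝ) < 1 / 2 ↔ b 0 = false := by
  obtain ⟨h0, h1⟩ := fromBinary_mem_Ioo (eventuallyConst_atTop_comp_add_one_iff.not.2 hb)
  rw [fromBinary_eq_half]
  cases b 0 <;> norm_num <;> linarith

theorem eventually_apply_zero_eq_of_fromBinary {b : ℕ → Bool}
    (hb : ¬EventuallyConst b atTop) :
    ∀ᶠ y in 𝓝 (fromBinary b : ℝ),
      ∀ b', ¬EventuallyConst b' atTop → (fromBinary b' : ℝ) = y → b' 0 = b 0 := by
  cases h : b 0
  · filter_upwards [Iio_mem_nhds ((fromBinary_lt_half_iff hb).2 h)] with y hy b' hb' hy'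
    exact (fromBinary_lt_half_iff hb').1 (hy' ▸ hy)
  · filter_upwards [Ioi_mem_nhds ((half_lt_fromBinary_iff hb).2 h)] with y hy b' hb' hy'
    exact (half_lt_fromBinary_iff hb').1 (hy' ▸ hy)

theorem eventually_apply_eq_of_fromBinary (i : ℕ) {b : ℕ → Bool}
    (hb : ¬EventuallyConst b atTop) :
    ∀ᶠ y in 𝓝 (fromBinary b : ℝ),
      ∀ b', ¬EventuallyConst b' atTop → (fromBinary b' : ℝ) = y → b' i = b i := by
  induction i generalizing b with
  | zero => exact eventually_apply_zero_eq_of_fromBinary hb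
  | succ i ih =>
    have hshift : Tendsto (fun y : ℝ ↦ 2 * y - (b 0).toNat) (𝓝 (fromBinary b : ℝ))
        (𝓝 (fromBinary fun n ↦ b (n + 1) : ℝ)) := by
      have h : (fromBinary fun n ↦ b (n + 1) : ℝ) = 2 * fromBinary b - (b 0).toNat := by
        rw [fromBinary_eq_half b]
        ring
      rw [h]
      exact ((continuous_const.mul continuous_id).sub continuous_const).tendsto _
    filter_upwards [eventually_apply_zero_eq_of_fromBinary hb,
      hshift.eventually (ih (eventuallyConst_atTop_comp_add_one_iff.not.2 hb))]
      with y h0 htail b' hb' hy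
    refine htail _ (eventuallyConst_atTop_comp_add_one_iff.not.2 hb') ?_
    rw [← hy, fromBinary_eq_half b', h0 b' hb' hy]
    ring

theorem isInducing_fromBinary_restrict :
    IsInducing fun b : {b : ℕ → Bool // ¬EventuallyConst b atTop} ↦ fromBinary b := by
  refine IsInducing.subtypeVal.of_comp_iff.1 (isInducing_iff_nhds.2 fun b ↦ le_antisymm
    ((fromBinary_continuous.subtype_val.comp continuous_subtype_val).tendsto b).le_comap ?_)
  rw [nhds_subtype _ b, ← tendsto_iff_comap, tendsto_pi_nhds]
  intro i
  rw [nhds_discrete Bool, tendsto_pure, eventually_comap]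
  filter_upwards [eventually_apply_eq_of_fromBinary i b.2] with y hy b' hb'
  exact hy b' b'.2 hb'

end Real

open Real in
theorem exists_dense_homeomorph_unitInterval {ι : Type*} {S : Set (ι → ℕ → Bool)} (hS : Dense S)
    (hS' : ∀ s ∈ S, ∀ i, ¬EventuallyConst (s i) atTop) :
    ∃ T : Set (ι → unitInterval), Dense T ∧ Nonempty (S ≃ₜ T) := by
  let code : S → ι → {b : ℕ → Bool // ¬EventuallyConst b atTop} :=
    fun s i ↦ ⟨s.1 i, hS' s s.2 i⟩
  have hcode : IsInducing code :=
    (IsInducing.piMap fun _ ↦ IsInducing.subtypeVal).of_comp_iff.1 IsInducing.subtypeVal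
  let F := Pi.map (fun _ b ↦ fromBinary b.1) ∘ code
  have hF : IsEmbedding F :=
    ((IsInducing.piMap fun _ ↦ isInducing_fromBinary_restrict).comp hcode).isEmbedding
  have hrange : range F = Pi.map (fun _ ↦ fromBinary) '' S := by
    change range (Pi.map (fun _ ↦ fromBinary) ∘ Subtype.val) = _
    rw [range_comp, Subtype.range_coe]
  refine ⟨range F, ?_, ⟨hF.toHomeomorph⟩⟩
  rw [hrange]
  exact (Function.Surjective.piMap fun _ ↦ fromBinary_surjective).denseRange.dense_image
    (continuous_pi fun i ↦ fromBinary_continuous.comp (continuous_apply i)) hS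

theorem exists_homeomorph_not_eventuallyConst {C : Type*} (κ : C ≃ C × ℕ) {S : Set (C → Bool)}
    (hS : S.Countable) :
    ∃ h : (C → Bool) ≃ₜ (C → ℕ → Bool), ∀ s ∈ S, ∀ c, ¬EventuallyConst (h s c) atTop := by
  let R : (C → Bool) ≃ₜ (C → ℕ → Bool) :=
    (Homeomorph.piCongrLeft (Y := fun _ ↦ Bool) κ).trans Homeomorph.piCurry
  choose m hm using fun c ↦ exists_xor_not_eventuallyConst (hS.image fun s ↦ R s c)
  let xorHomeomorph (x : Bool) : Bool ≃ₜ Bool :=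
    (Function.Involutive.toPerm (xor · x) fun a ↦ Bool.bne_self_right a x).toHomeomorphOfDiscrete
  exact ⟨R.trans (.piCongrRight fun c ↦ .piCongrRight fun n ↦ xorHomeomorph (m c n)),
    fun s hs c ↦ hm c _ (mem_image_of_mem _ hs)⟩

/-- Every countable dense subspace of the Cantor cube `D(2)^𝔠` is homeomorphic to a
dense subspace of the Tychonov cube `[0,1]^𝔠`. -/
theorem stmt_16 (C : Type) (hC : #C = Cardinal.continuum)
    (S : Set (C → Bool)) (hcount : S.Countable) (hdense : Dense S) :
    ∃ T : Set (C → ↥(Set.Icc (0 : ℝ) 1)), Dense T ∧ Nonempty (↥S ≃ₜ ↥T) := by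
  obtain ⟨κ⟩ := nonempty_equiv_prod_nat (hC ▸ aleph0_le_continuum)
  obtain ⟨h, hh⟩ := exists_homeomorph_not_eventuallyConst κ hcount
  obtain ⟨T, hT, ⟨e⟩⟩ := exists_dense_homeomorph_unitInterval
    (h.surjective.denseRange.dense_image h.continuous hdense)
    (by rintro _ ⟨s, hs, rfl⟩; exact hh s hs)
  exact ⟨T, hT, ⟨(h.image S).trans e⟩⟩
end

section
/- Let ω ≤ λ < μ < κ be cardinals and X a topological space with cellularity c(X) ≤ μ. If X can be partitioned into λ many pairwise disjoint dense OHI subspaces and also into κ many pairwise disjoint dense OHI subspaces, then X can be partitioned into μ many pairwise disjoint dense OHI subspaces. -/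
open Cardinal Set

universe u

variable {X : Type u} [TopologicalSpace X]

/-- `T` is a dense subset of the subspace `S`. -/
def DenseIn (T S : Set X) : Prop := T ⊆ S ∧ S ⊆ closure T

/-- The subspace `A` is OHI: every dense subset of `A` contains a relatively open dense
subset. -/
def OHIIn (A : Set X) : Prop :=
  ∀ T : Set X, DenseIn T A →
    ∃ T' ⊆ T, DenseIn T' A ∧ ∃ U : Set X, IsOpen U ∧ T' = U ∩ A

/-- `X` can be partitioned into `μ` many pairwise disjoint dense OHI subspaces. -/
def PartitionOHI (X : Type u) [TopologicalSpace X] (μ : Cardinal.{u}) : Prop :=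
  ∃ 𝒮 : Set (Set X), #↥𝒮 = μ ∧ 𝒮.PairwiseDisjoint id ∧ ⋃₀ 𝒮 = Set.univ ∧
    ∀ A ∈ 𝒮, Dense A ∧ OHIIn A

/-!
Fix a part `A` of the `λ`-partition and call a nonempty open set `O` fat if `A ∩ ⋃ S` is dense
in `O` for some family `S` of at most `μ` parts of the `κ`-partition. By `c(X) ≤ μ` a maximal
disjoint family of fat sets has at most `μ` members, so at most `μ` parts of the `κ`-partition
witness all of them; over all `A` these are still at most `μ` parts. As `μ < κ`, pick `μ` other
parts `I` of the `κ`-partition. Every `A \ ⋃ I` stays dense: on a fat set it contains the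
witnessing `A ∩ ⋃ S`, and by maximality `A ∩ ⋃ I` is nowhere dense in the open set where no
fat set lives. Then `{A \ ⋃ I} ∪ I` is the required partition, each `A \ ⋃ I` being OHI as a
dense subset of the OHI subspace `A`.
-/

lemma mk_biUnion_le_of_forall_mk_le {α ι : Type u} {μ : Cardinal.{u}} (hμ : ℵ₀ ≤ μ)
    {s : Set ι} {f : ι → Set α} (hs : #s ≤ μ) (hf : ∀ i ∈ s, #(f i) ≤ μ) :
    #(⋃ i ∈ s, f i) ≤ μ :=
  calc #(⋃ i ∈ s, f i) ≤ #s * ⨆ i : s, #(f i) := mk_biUnion_le f s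
    _ ≤ μ * μ := mul_le_mul' hs (ciSup_le' fun i => hf i i.2)
    _ = μ := mul_eq_self hμ

lemma le_mk_sdiff_of_lt {α : Type u} {μ : Cardinal.{u}} (hμ : ℵ₀ ≤ μ) {S T : Set α}
    (hS : μ < #S) (hT : #T ≤ μ) : μ ≤ #(S \ T : Set α) := by
  by_contra! h
  refine (le_mk_sdiff_add_mk S T).not_gt (hS.trans_le' ?_)
  calc #(S \ T : Set α) + #T ≤ μ + μ := add_le_add h.le hT
    _ = μ := add_eq_self hμ

lemma Set.PairwiseDisjoint.disjoint_sUnion_sUnion {α : Type*} {ℬ S T : Set (Set α)}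
    (hℬ : ℬ.PairwiseDisjoint id) (hS : S ⊆ ℬ) (hT : T ⊆ ℬ) (hST : Disjoint S T) :
    Disjoint (⋃₀ S) (⋃₀ T) :=
  disjoint_sUnion_left.2 fun _ hs => disjoint_sUnion_right.2 fun _ ht =>
    hℬ (hS hs) (hT ht) fun h => disjoint_left.1 hST hs (h ▸ ht)

lemma exists_pairwiseDisjoint_forall_inter_nonempty {α : Type*} (P : Set α → Prop) :
    ∃ V : Set (Set α), (∀ O ∈ V, P O) ∧ V.PairwiseDisjoint id ∧
      ∀ O, P O → O.Nonempty → ∃ O' ∈ V, (O ∩ O').Nonempty := by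
  obtain ⟨V, hV⟩ := zorn_subset {V : Set (Set α) | (∀ O ∈ V, P O) ∧ V.PairwiseDisjoint id}
    fun c hc hchain => ⟨⋃₀ c, ⟨fun O ⟨V, hV, hO⟩ => (hc hV).1 O hO,
      (hchain.pairwiseDisjoint_sUnion id).2 fun V hV => (hc hV).2⟩,
      fun _ => subset_sUnion_of_mem⟩
  refine ⟨V, hV.prop.1, hV.prop.2, fun O hO hOne => ?_⟩
  by_contra! hdisj
  have hOV : O ∈ V := hV.mem_of_prop_insert
    ⟨forall_mem_insert.2 ⟨hO, hV.prop.1⟩,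
      hV.prop.2.insert fun O' hO' _ => disjoint_iff_inter_eq_empty.2 (hdisj O' hO')⟩
  exact hOne.ne_empty (by simpa using hdisj O hOV)

lemma OHIIn.of_denseIn {A D : Set X} (hA : OHIIn A) (hD : DenseIn D A) : OHIIn D := by
  rintro T ⟨hTD, hDT⟩
  have hAT : A ⊆ closure T := hD.2.trans (closure_minimal hDT isClosed_closure)
  obtain ⟨-, hT'T, hT'A, U, hU, rfl⟩ := hA T ⟨hTD.trans hD.1, hAT⟩
  have hUAD : U ∩ A ⊆ D := hT'T.trans hTD
  refine ⟨U ∩ A, hT'T, ⟨hUAD, hD.1.trans hT'A.2⟩, U, hU, ?_⟩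
  exact subset_antisymm (fun x hx => ⟨hx.1, hUAD hx⟩) (fun x hx => ⟨hx.1, hD.1 hx.2⟩)

def IsOHIPartition (𝒮 : Set (Set X)) : Prop :=
  𝒮.PairwiseDisjoint id ∧ ⋃₀ 𝒮 = Set.univ ∧ ∀ A ∈ 𝒮, Dense A ∧ OHIIn A

lemma partitionOHI_iff {μ : Cardinal.{u}} :
    PartitionOHI X μ ↔ ∃ 𝒮 : Set (Set X), #𝒮 = μ ∧ IsOHIPartition 𝒮 :=
  Iff.rfl

lemma IsOHIPartition.image_sdiff_union {𝒜 I : Set (Set X)} (h𝒜 : IsOHIPartition 𝒜)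
    (hI : I.PairwiseDisjoint id) (hIOHI : ∀ B ∈ I, Dense B ∧ OHIIn B)
    (hdense : ∀ A ∈ 𝒜, Dense (A \ ⋃₀ I)) :
    IsOHIPartition ((· \ ⋃₀ I) '' 𝒜 ∪ I) := by
  obtain ⟨h𝒜disj, h𝒜cover, h𝒜OHI⟩ := h𝒜
  refine ⟨?_, ?_, ?_⟩
  · rintro _ (⟨A, hA, rfl⟩ | hB) _ (⟨A', hA', rfl⟩ | hB') hne
    · exact (h𝒜disj hA hA' fun h => hne (h ▸ rfl)).mono sdiff_subset sdiff_subset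
    · exact disjoint_sdiff_left.mono_right (subset_sUnion_of_mem hB')
    · exact disjoint_sdiff_right.mono_left (subset_sUnion_of_mem hB)
    · exact hI hB hB' hne
  · refine eq_univ_of_forall fun x => ?_
    obtain ⟨A, hA, hxA⟩ := mem_sUnion.1 (h𝒜cover ▸ mem_univ x)
    by_cases hxI : x ∈ ⋃₀ I
    · obtain ⟨B, hB, hxB⟩ := hxI
      exact ⟨B, Or.inr hB, hxB⟩
    · exact ⟨A \ ⋃₀ I, Or.inl ⟨A, hA, rfl⟩, hxA, hxI⟩
  · rintro _ (⟨A, hA, rfl⟩ | hB)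
    · exact ⟨hdense A hA, (h𝒜OHI A hA).2.of_denseIn ⟨sdiff_subset, (hdense A hA).closure_eq ▸
        subset_univ A⟩⟩
    · exact hIOHI _ hB

lemma exists_mk_le_forall_dense_sdiff_sUnion {ℬ : Set (Set X)} (hℬ : ℬ.PairwiseDisjoint id)
    {μ : Cardinal.{u}} (hμ : ℵ₀ ≤ μ)
    (hcell : ∀ 𝒰 : Set (Set X), (∀ U ∈ 𝒰, IsOpen U ∧ U.Nonempty) →
      𝒰.PairwiseDisjoint id → #↥𝒰 ≤ μ)
    {A : Set X} (hA : Dense A) :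
    ∃ 𝒞 : Set (Set X), #𝒞 ≤ μ ∧
      ∀ I ⊆ ℬ, #I ≤ μ → Disjoint 𝒞 I → Dense (A \ ⋃₀ I) := by
  obtain ⟨V, hVfat, hVdisj, hVmax⟩ := exists_pairwiseDisjoint_forall_inter_nonempty
    fun O : Set X => IsOpen O ∧ O.Nonempty ∧
      ∃ S ⊆ ℬ, #S ≤ μ ∧ O ⊆ closure (⋃₀ S ∩ A)
  choose! Sel hSelℬ hSelμ hSelcl using fun O (hO : O ∈ V) => (hVfat O hO).2.2
  refine ⟨⋃ O ∈ V, Sel O, mk_biUnion_le_of_forall_mk_le hμ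
    (hcell V (fun O hO => ⟨(hVfat O hO).1, (hVfat O hO).2.1⟩) hVdisj) hSelμ,
    fun I hIℬ hIμ h𝒞I => dense_iff_inter_open.2 fun U hU hUne => ?_⟩
  by_cases hUV : ∃ O ∈ V, (U ∩ O).Nonempty
  · obtain ⟨O, hOV, x, hxU, hxO⟩ := hUV
    obtain ⟨y, hyU, hySel, hyA⟩ := mem_closure_iff.1 (hSelcl O hOV hxO) U hU hxU
    have hSelI : Disjoint (⋃₀ Sel O) (⋃₀ I) := hℬ.disjoint_sUnion_sUnion (hSelℬ O hOV) hIℬ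
      (h𝒞I.mono_left (subset_biUnion_of_mem (u := Sel) hOV))
    exact ⟨y, hyU, hyA, disjoint_left.1 hSelI hySel⟩
  · -- `U` misses every region of `V`, so by maximality `⋃₀ I ∩ A` cannot be dense in `U`.
    have hUI : ¬ U ⊆ closure (⋃₀ I ∩ A) := fun hsub =>
      hUV (hVmax U ⟨hU, hUne, I, hIℬ, hIμ, hsub⟩ hUne)
    obtain ⟨x, ⟨hxU, hxI⟩, hxA⟩ := hA.inter_open_nonempty _ (hU.sdiff isClosed_closure)
      (not_subset.1 hUI)
    exact ⟨x, hxU, hxA, fun hx => hxI (subset_closure ⟨hx, hxA⟩)⟩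

/-- If `ω ≤ λ < μ < κ`, `c(X) ≤ μ`, and `X` can be partitioned into `λ` many and into
`κ` many dense OHI subspaces, then `X` can be partitioned into `μ` many dense OHI
subspaces. -/
theorem stmt_18 (lam mu kap : Cardinal.{u}) (hlam : ℵ₀ ≤ lam)
    (h1 : lam < mu) (h2 : mu < kap) (X : Type u) [TopologicalSpace X]
    (hcell : ∀ 𝒰 : Set (Set X), (∀ U ∈ 𝒰, IsOpen U ∧ U.Nonempty) →
      𝒰.PairwiseDisjoint id → #↥𝒰 ≤ mu)
    (hl : PartitionOHI X lam) (hk : PartitionOHI X kap) :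
    PartitionOHI X mu := by
  obtain ⟨𝒜, h𝒜card, h𝒜⟩ := partitionOHI_iff.1 hl
  obtain ⟨ℬ, hℬcard, hℬ⟩ := partitionOHI_iff.1 hk
  have hmu : ℵ₀ ≤ mu := hlam.trans h1.le
  choose! 𝒞 h𝒞card h𝒞dense using fun A (hA : A ∈ 𝒜) =>
    exists_mk_le_forall_dense_sdiff_sUnion hℬ.1 hmu hcell (h𝒜.2.2 A hA).1
  have h𝒞 : #(⋃ A ∈ 𝒜, 𝒞 A) ≤ mu :=
    mk_biUnion_le_of_forall_mk_le hmu (h𝒜card.trans_le h1.le) h𝒞card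
  obtain ⟨I, hI, hIcard⟩ := le_mk_iff_exists_subset.1 (le_mk_sdiff_of_lt hmu (hℬcard ▸ h2) h𝒞)
  have hIℬ : I ⊆ ℬ := hI.trans sdiff_subset
  have hdense (A) (hA : A ∈ 𝒜) : Dense (A \ ⋃₀ I) := h𝒞dense A hA I hIℬ hIcard.le
    ((disjoint_sdiff_right.mono_left (subset_biUnion_of_mem (u := 𝒞) hA)).mono_right hI)
  refine partitionOHI_iff.2 ⟨(· \ ⋃₀ I) '' 𝒜 ∪ I,
    le_antisymm ?_ (hIcard ▸ mk_le_mk_of_subset subset_union_right),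
    h𝒜.image_sdiff_union (hℬ.1.subset hIℬ) (fun B hB => hℬ.2.2 B (hIℬ hB)) hdense⟩
  calc #↥((· \ ⋃₀ I) '' 𝒜 ∪ I) ≤ #↥((· \ ⋃₀ I) '' 𝒜) + #I := mk_union_le _ _
    _ ≤ mu + mu := add_le_add (mk_image_le.trans (h𝒜card.trans_le h1.le)) hIcard.le
    _ = mu := add_eq_self hmu
end
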